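/- Let R be a ring with local units and P a locally projective unitary left R-module. Let S be a subring of End_R(P) such that P is a unitary right S-module, S·End_R(P) = S, and Pf is a finitely generated left R-module for every idempotent f ∈ S. Then the functor SHom_R(P,−) : 𝒞_P → SMod is an equivalence of categories. -/

import Mathlib

set_option linter.unusedVariables false

/-! ### Core: non-unital rings with local units, modules, homomorphisms, categories -/

universe u v w

open MulOpposite CategoryTheory

/-- A ring with local units: every finite subset is contained in a subring
of the form `eRe` for an idempotent `e`; equivalently, every finite subset
admits an idempotent acting as a two-sided identity on it. -/
class HasLocalUnits (R : Type u) [NonUnitalRing R] : Prop where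
  exists_unit : ∀ s : Finset R, ∃ e : R, e * e = e ∧ ∀ x ∈ s, e * x = x ∧ x * e = x

/-- A (left) module over a non-unital ring. -/
class LMod (R : Type u) [NonUnitalRing R] (M : Type v) [AddCommGroup M] extends SMul R M where
  smul_add' : ∀ (r : R) (m n : M), r • (m + n) = r • m + r • n
  add_smul' : ∀ (r s : R) (m : M), (r + s) • m = r • m + s • m
  mul_smul' : ∀ (r s : R) (m : M), (r * s) • m = r • (s • m)

section basic
variable {R : Type u} [NonUnitalRing R] {M : Type v} [AddCommGroup M] [LMod R M]

theorem LMod.smul_zero' (r : R) : r • (0 : M) = 0 := by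
  have h := LMod.smul_add' r (0 : M) 0
  rw [add_zero] at h
  have h2 : r • (0 : M) + r • (0 : M) = r • (0 : M) + 0 := by rw [← h, add_zero]
  exact add_left_cancel h2

theorem LMod.zero_smul' (m : M) : (0 : R) • m = 0 := by
  have h := LMod.add_smul' (0 : R) 0 m
  rw [add_zero] at h
  have h2 : (0 : R) • m + (0 : R) • m = (0 : R) • m + 0 := by rw [← h, add_zero]
  exact add_left_cancel h2

theorem LMod.smul_neg' (r : R) (m : M) : r • (-m) = -(r • m) := by
  have h : r • m + r • (-m) = 0 := by
    rw [← LMod.smul_add' r m (-m), add_neg_cancel, LMod.smul_zero']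
  exact eq_neg_of_add_eq_zero_right h

end basic

/-- `f : M → N` is a homomorphism of (non-unital) `R`-modules. -/
structure IsLHom (R : Type u) [NonUnitalRing R] {M : Type v} {N : Type w}
    [AddCommGroup M] [AddCommGroup N] [LMod R M] [LMod R N] (f : M → N) : Prop where
  map_add : ∀ x y, f (x + y) = f x + f y
  map_smul : ∀ (r : R) (x : M), f (r • x) = r • f x

theorem IsLHom.map_zero {R : Type u} [NonUnitalRing R] {M : Type v} {N : Type w}
    [AddCommGroup M] [AddCommGroup N] [LMod R M] [LMod R N] {f : M → N}
    (hf : IsLHom R f) : f 0 = 0 := by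
  have h := hf.map_add 0 0
  rw [add_zero] at h
  have h2 : f 0 + f 0 = f 0 + 0 := by rw [← h, add_zero]
  exact add_left_cancel h2

theorem IsLHom.map_neg {R : Type u} [NonUnitalRing R] {M : Type v} {N : Type w}
    [AddCommGroup M] [AddCommGroup N] [LMod R M] [LMod R N] {f : M → N}
    (hf : IsLHom R f) (x : M) : f (-x) = -(f x) := by
  have h : f x + f (-x) = 0 := by rw [← hf.map_add, add_neg_cancel, hf.map_zero]
  exact eq_neg_of_add_eq_zero_right h

/-- The type of homomorphisms of (non-unital) `R`-modules. -/
def LinMap (R : Type u) [NonUnitalRing R] (M : Type v) (N : Type w)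
    [AddCommGroup M] [AddCommGroup N] [LMod R M] [LMod R N] : Type (max v w) :=
  {f : M → N // IsLHom R f}

namespace LinMap

variable {R : Type u} [NonUnitalRing R] {M : Type v} {N : Type w}
    [AddCommGroup M] [AddCommGroup N] [LMod R M] [LMod R N]

theorem ext {f g : LinMap R M N} (h : f.1 = g.1) : f = g := Subtype.ext h

instance : Add (LinMap R M N) :=
  ⟨fun f g => ⟨fun x => f.1 x + g.1 x,
    ⟨fun x y => by rw [f.2.map_add, g.2.map_add]; abel,
     fun r x => by rw [f.2.map_smul, g.2.map_smul, LMod.smul_add']⟩⟩⟩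

instance : Zero (LinMap R M N) :=
  ⟨⟨fun _ => 0, ⟨fun _ _ => by rw [add_zero], fun r _ => (LMod.smul_zero' r).symm⟩⟩⟩

instance : Neg (LinMap R M N) :=
  ⟨fun f => ⟨fun x => -(f.1 x),
    ⟨fun x y => by rw [f.2.map_add]; abel,
     fun r x => by rw [f.2.map_smul, LMod.smul_neg']⟩⟩⟩

instance : AddCommGroup (LinMap R M N) where
  add_assoc f g h := ext (funext fun x => add_assoc _ _ _)
  zero_add f := ext (funext fun x => zero_add _)
  add_zero f := ext (funext fun x => add_zero _)
  add_comm f g := ext (funext fun x => add_comm _ _)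
  neg_add_cancel f := ext (funext fun x => neg_add_cancel _)
  nsmul := nsmulRec
  zsmul := zsmulRec

@[simp] theorem add_apply (f g : LinMap R M N) (x : M) : (f + g).1 x = f.1 x + g.1 x := rfl
@[simp] theorem zero_apply (x : M) : (0 : LinMap R M N).1 x = 0 := rfl
@[simp] theorem neg_apply (f : LinMap R M N) (x : M) : (-f).1 x = -(f.1 x) := rfl

end LinMap

/-- The endomorphism ring of a module over a non-unital ring, with the
"diagrammatic" multiplication `(f * g) x = g (f x)` (i.e. `f * g` means
"first `f`, then `g`", matching homomorphisms written on the right). -/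
instance LinMap.instNonUnitalRing {R : Type u} [NonUnitalRing R] {M : Type v}
    [AddCommGroup M] [LMod R M] : NonUnitalRing (LinMap R M M) :=
  { (inferInstance : AddCommGroup (LinMap R M M)) with
    mul := fun f g => ⟨fun x => g.1 (f.1 x),
      ⟨fun x y => by rw [f.2.map_add, g.2.map_add], fun r x => by rw [f.2.map_smul, g.2.map_smul]⟩⟩
    left_distrib := fun f g h => LinMap.ext (funext fun x => rfl)
    right_distrib := fun f g h => LinMap.ext (funext fun x => h.2.map_add _ _)
    zero_mul := fun f => LinMap.ext (funext fun x => f.2.map_zero)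
    mul_zero := fun f => LinMap.ext (funext fun x => rfl)
    mul_assoc := fun f g h => LinMap.ext (funext fun x => rfl) }

@[simp] theorem LinMap.mul_apply {R : Type u} [NonUnitalRing R] {M : Type v}
    [AddCommGroup M] [LMod R M] (f g : LinMap R M M) (x : M) : (f * g).1 x = g.1 (f.1 x) := rfl

/-- A module `M` over a non-unital ring `R` is unitary if `RM = M`. -/
def IsUnitary (R : Type u) [NonUnitalRing R] (M : Type v) [AddCommGroup M] [LMod R M] : Prop :=
  ∀ m : M, m ∈ AddSubgroup.closure {x : M | ∃ (r : R) (n : M), x = r • n}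

/-- The `R`-submodule (as an additive subgroup) generated by a subset. -/
def lspan (R : Type u) [NonUnitalRing R] {M : Type v} [AddCommGroup M] [LMod R M]
    (X : Set M) : AddSubgroup M :=
  AddSubgroup.closure (X ∪ {m | ∃ (r : R) (x : M), x ∈ X ∧ m = r • x})

/-- A subset `A` of a module is finitely generated (as an `R`-submodule). -/
def IsFGSet (R : Type u) [NonUnitalRing R] {M : Type v} [AddCommGroup M] [LMod R M]
    (A : Set M) : Prop :=
  ∃ s : Finset M, (↑s : Set M) ⊆ A ∧ ∀ a ∈ A, a ∈ lspan R (↑s : Set M)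

/-- A finitely generated module over a non-unital ring. -/
def IsFG (R : Type u) [NonUnitalRing R] (M : Type v) [AddCommGroup M] [LMod R M] : Prop :=
  ∃ s : Finset M, ∀ m : M, m ∈ lspan R (↑s : Set M)

/-- The category of unitary left modules over a ring with local units
(objects: unitary left `R`-modules). -/
structure UMod (R : Type u) [NonUnitalRing R] : Type (max u (v + 1)) where
  carrier : Type v
  [grp : AddCommGroup carrier]
  [mod : LMod R carrier]
  unitary : IsUnitary R carrier

attribute [instance] UMod.grp UMod.mod

instance {R : Type u} [NonUnitalRing R] : CoeSort (UMod.{u, v} R) (Type v) := ⟨UMod.carrier⟩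

instance UMod.instCategory {R : Type u} [NonUnitalRing R] : Category (UMod.{u, v} R) where
  Hom M N := LinMap R M.carrier N.carrier
  id M := ⟨fun x => x, ⟨fun _ _ => rfl, fun _ _ => rfl⟩⟩
  comp f g := ⟨fun x => g.1 (f.1 x),
    ⟨fun x y => by rw [f.2.map_add, g.2.map_add], fun r x => by rw [f.2.map_smul, g.2.map_smul]⟩⟩
  id_comp f := LinMap.ext rfl
  comp_id f := LinMap.ext rfl
  assoc f g h := LinMap.ext rfl

@[simp] theorem UMod.comp_apply {R : Type u} [NonUnitalRing R] {M N K : UMod.{u, v} R}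
    (f : M ⟶ N) (g : N ⟶ K) (x : M.carrier) : (f ≫ g).1 x = g.1 (f.1 x) := rfl

@[simp] theorem UMod.id_apply {R : Type u} [NonUnitalRing R] {M : UMod.{u, v} R}
    (x : M.carrier) : (𝟙 M : M ⟶ M).1 x = x := rfl

instance UMod.instPreadditive {R : Type u} [NonUnitalRing R] :
    Preadditive (UMod.{u, v} R) where
  homGroup M N := inferInstanceAs (AddCommGroup (LinMap R M.carrier N.carrier))
  add_comp M N K f f' g := LinMap.ext (funext fun x => g.2.map_add _ _)
  comp_add M N K f g g' := LinMap.ext (funext fun x => rfl)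

/-- A unitary module `P` is a generator of the category of unitary left `R`-modules. -/
def IsGenerator (R : Type u) [NonUnitalRing R] (P : UMod.{u, v} R) : Prop :=
  ∀ (M B : UMod.{u, v} R) (f g : M ⟶ B), f ≠ g → ∃ h : P ⟶ M, h ≫ f ≠ h ≫ g

/-- A set of unitary modules is a cogenerating set for the category of
unitary left `R`-modules. -/
def IsCogenSet (R : Type u) [NonUnitalRing R] (𝒰 : Set (UMod.{u, v} R)) : Prop :=
  ∀ (B M : UMod.{u, v} R) (f g : B ⟶ M), f ≠ g → ∃ U' ∈ 𝒰, ∃ h : M ⟶ U', f ≫ h ≠ g ≫ h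
/-! ### The largest unitary submodule `C·H` of a module `H`, and induced
module structures on hom-groups -/

section umax

variable (C : Type u) [NonUnitalRing C] (H : Type v) [AddCommGroup H] [LMod C H]

/-- `C·H`, the largest unitary `C`-submodule of the `C`-module `H`. -/
def umax : AddSubgroup H :=
  AddSubgroup.closure {h : H | ∃ (c : C) (h' : H), h = c • h'}

variable {C H}

theorem smul_mem_umax (c : C) (h : H) : c • h ∈ umax C H :=
  AddSubgroup.subset_closure ⟨c, h, rfl⟩

/-- An additive, `C`-equivariant map carries `C·H` into `C·H'`. -/
theorem umax_mapsTo {H' : Type w} [AddCommGroup H'] [LMod C H'] (T : H → H')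
    (hadd : ∀ x y, T (x + y) = T x + T y) (hsmul : ∀ (c : C) (x : H), T (c • x) = c • T x)
    {h : H} (hh : h ∈ umax C H) : T h ∈ umax C H' := by
  have hT : IsLHom C T := ⟨hadd, hsmul⟩
  induction hh using AddSubgroup.closure_induction with
  | mem x hx =>
    obtain ⟨c, h', rfl⟩ := hx
    rw [hsmul]; exact smul_mem_umax c (T h')
  | zero => rw [hT.map_zero]; exact (umax C H').zero_mem
  | add x y hx hy ihx ihy => rw [hadd]; exact (umax C H').add_mem ihx ihy
  | neg x hx ihx => rw [hT.map_neg]; exact (umax C H').neg_mem ihx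

instance umax.instLMod : LMod C ↥(umax C H) where
  smul c h := ⟨c • h.1, smul_mem_umax c h.1⟩
  smul_add' c m n := Subtype.ext (LMod.smul_add' c m.1 n.1)
  add_smul' c c' m := Subtype.ext (LMod.add_smul' c c' m.1)
  mul_smul' c c' m := Subtype.ext (LMod.mul_smul' c c' m.1)

@[simp] theorem umax.smul_coe (c : C) (h : ↥(umax C H)) : (c • h).1 = c • h.1 := rfl

/-- If a second ring `D` acts on `H` commuting with the `C`-action,
then `C·H` is stable under the `D`-action. -/
theorem umax_stable {D : Type w} [NonUnitalRing D] [LMod D H] [SMulCommClass C D H]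
    (d : D) {h : H} (hh : h ∈ umax C H) : d • h ∈ umax C H :=
  umax_mapsTo (fun x => d • x) (fun x y => LMod.smul_add' d x y)
    (fun c x => (smul_comm c d x).symm) hh

instance umax.instLMod₂ {D : Type w} [NonUnitalRing D] [LMod D H] [SMulCommClass C D H] :
    LMod D ↥(umax C H) where
  smul d h := ⟨d • h.1, umax_stable d h.2⟩
  smul_add' d m n := Subtype.ext (LMod.smul_add' d m.1 n.1)
  add_smul' d d' m := Subtype.ext (LMod.add_smul' d d' m.1)
  mul_smul' d d' m := Subtype.ext (LMod.mul_smul' d d' m.1)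

instance umax.instSMulCommClass {D : Type w} [NonUnitalRing D] [LMod D H]
    [SMulCommClass C D H] : SMulCommClass C D ↥(umax C H) :=
  ⟨fun c d h => Subtype.ext (smul_comm c d h.1)⟩

/-- If `C` has local units, then `C·H` is a unitary `C`-module. -/
theorem umax_unitary [HasLocalUnits C] : IsUnitary C ↥(umax C H) := by
  intro m
  obtain ⟨h, hh⟩ := m
  induction hh using AddSubgroup.closure_induction with
  | mem x hx =>
    obtain ⟨c, h', rfl⟩ := hx
    obtain ⟨e, he, hec⟩ := HasLocalUnits.exists_unit {c}
    have hc := (hec c (Finset.mem_singleton_self c)).1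
    refine AddSubgroup.subset_closure ⟨e, ⟨c • h', smul_mem_umax c h'⟩, ?_⟩
    refine Subtype.ext ?_
    show c • h' = e • (c • h')
    rw [← LMod.mul_smul', hc]
  | zero =>
    have : (⟨(0 : H), (umax C H).zero_mem⟩ : ↥(umax C H)) = 0 := rfl
    rw [this]; exact AddSubgroup.zero_mem _
  | add x y hx hy ihx ihy =>
    have : (⟨x + y, (umax C H).add_mem hx hy⟩ : ↥(umax C H)) =
        ⟨x, hx⟩ + ⟨y, hy⟩ := rfl
    rw [this]; exact AddSubgroup.add_mem _ ihx ihy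
  | neg x hx ihx =>
    have : (⟨-x, (umax C H).neg_mem hx⟩ : ↥(umax C H)) = -⟨x, hx⟩ := rfl
    rw [this]; exact AddSubgroup.neg_mem _ ihx

end umax

section regular

variable (R : Type u) [NonUnitalRing R]

/-- The left regular module structure of a non-unital ring on itself. -/
instance NonUnitalRing.instLModSelf : LMod R R where
  smul := (· * ·)
  smul_add' := mul_add
  add_smul' := add_mul
  mul_smul' := mul_assoc

@[simp] theorem NonUnitalRing.smul_def (r s : R) : r • s = r * s := rfl

/-- The right regular module structure, as a left module over the opposite ring. -/
instance NonUnitalRing.instLModSelfOp : LMod Rᵐᵒᵖ R where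
  smul r s := s * r.unop
  smul_add' r m n := add_mul m n r.unop
  add_smul' r r' m := mul_add m r.unop r'.unop
  mul_smul' r r' m := (mul_assoc m r'.unop r.unop).symm

@[simp] theorem NonUnitalRing.op_smul_def (r : Rᵐᵒᵖ) (s : R) : r • s = s * r.unop := rfl

instance : SMulCommClass R Rᵐᵒᵖ R :=
  ⟨fun r s x => by
    show r * (x * s.unop) = (r * x) * s.unop
    rw [mul_assoc]⟩

/-- Local units pass to the opposite ring. -/
instance instHasLocalUnitsOp [HasLocalUnits R] : HasLocalUnits Rᵐᵒᵖ where
  exists_unit s := by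
    classical
    obtain ⟨e, he, h⟩ := HasLocalUnits.exists_unit (R := R) (s.image MulOpposite.unop)
    refine ⟨MulOpposite.op e, by rw [← MulOpposite.op_mul, he], fun x hx => ?_⟩
    have hx' := h x.unop (Finset.mem_image_of_mem MulOpposite.unop hx)
    constructor
    · conv_lhs => rw [← MulOpposite.op_unop x, ← MulOpposite.op_mul, hx'.2, MulOpposite.op_unop]
    · conv_lhs => rw [← MulOpposite.op_unop x, ← MulOpposite.op_mul, hx'.1, MulOpposite.op_unop]

end regular

section homact

variable {A B C : Type u} [NonUnitalRing A] [NonUnitalRing B] [NonUnitalRing C]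
variable {X : Type v} {Y : Type w} [AddCommGroup X] [AddCommGroup Y] [LMod B X] [LMod B Y]

/-- The action of `A` on `Hom_B(X, Y)` by precomposition with the right
`A`-action on `X` (homomorphisms written on the right: `(a • f) x = f (x·a)`). -/
instance LinMap.instLModPre [LMod Aᵐᵒᵖ X] [SMulCommClass B Aᵐᵒᵖ X] :
    LMod A (LinMap B X Y) where
  smul a f := ⟨fun x => f.1 (op a • x),
    ⟨fun x y => by rw [LMod.smul_add', f.2.map_add],
     fun r x => by rw [← smul_comm r (op a) x, f.2.map_smul]⟩⟩
  smul_add' a f g := LinMap.ext rfl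
  add_smul' a a' f := LinMap.ext (funext fun x => by
    show f.1 (op (a + a') • x) = f.1 (op a • x) + f.1 (op a' • x)
    rw [← f.2.map_add, ← LMod.add_smul']
    rfl)
  mul_smul' a a' f := LinMap.ext (funext fun x => by
    show f.1 (op (a * a') • x) = f.1 (op a' • (op a • x))
    rw [← LMod.mul_smul']
    rfl)

theorem LinMap.pre_smul_apply [LMod Aᵐᵒᵖ X] [SMulCommClass B Aᵐᵒᵖ X]
    (a : A) (f : LinMap B X Y) (x : X) : (a • f).1 x = f.1 (op a • x) := rfl

/-- The action of `C` on `Hom_B(X, Y)` by postcomposition with a commuting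
`C`-action on `Y`. -/
instance LinMap.instLModPost [LMod C Y] [SMulCommClass B C Y] :
    LMod C (LinMap B X Y) where
  smul c f := ⟨fun x => c • f.1 x,
    ⟨fun x y => by rw [f.2.map_add, LMod.smul_add'],
     fun r x => by rw [f.2.map_smul]; exact (smul_comm r c (f.1 x)).symm⟩⟩
  smul_add' c f g := LinMap.ext (funext fun x => LMod.smul_add' c (f.1 x) (g.1 x))
  add_smul' c c' f := LinMap.ext (funext fun x => LMod.add_smul' c c' (f.1 x))
  mul_smul' c c' f := LinMap.ext (funext fun x => LMod.mul_smul' c c' (f.1 x))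

theorem LinMap.post_smul_apply [LMod C Y] [SMulCommClass B C Y]
    (c : C) (f : LinMap B X Y) (x : X) : (c • f).1 x = c • (f.1 x) := rfl

/-- Pre- and postcomposition actions on hom-groups commute. -/
instance LinMap.instSMulCommClassPrePost [LMod Aᵐᵒᵖ X] [SMulCommClass B Aᵐᵒᵖ X]
    [LMod C Y] [SMulCommClass B C Y] : SMulCommClass A C (LinMap B X Y) :=
  ⟨fun a c f => LinMap.ext rfl⟩

end homact
/-! ### Split direct systems and direct limits of unitary modules -/

section dirsys

variable (R : Type u) [NonUnitalRing R]

/-- A split direct system of unitary left `R`-modules, indexed by a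
quasi-ordered set `(ι, rel)`: a direct system `(P_i, φ_{ij})` together with
splittings `ψ_{ji} : P_j → P_i` (for `i ≤ j`) such that `φ_{ij} ψ_{ji} = id`
and `ψ_{kj} ψ_{ji} = ψ_{ki}`. -/
structure SplitSystem (ι : Type w) (rel : ι → ι → Prop) : Type (max u w (v + 1)) where
  obj : ι → UMod.{u, v} R
  map : ∀ {i j : ι}, rel i j → (obj i ⟶ obj j)
  split : ∀ {i j : ι}, rel i j → (obj j ⟶ obj i)
  map_self : ∀ {i : ι} (h : rel i i) (x : (obj i).carrier), (map h).1 x = x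
  map_map : ∀ {i j k : ι} (hij : rel i j) (hjk : rel j k) (hik : rel i k)
    (x : (obj i).carrier), (map hjk).1 ((map hij).1 x) = (map hik).1 x
  split_map : ∀ {i j : ι} (h : rel i j) (x : (obj i).carrier),
    (split h).1 ((map h).1 x) = x
  split_split : ∀ {i j k : ι} (hij : rel i j) (hjk : rel j k) (hik : rel i k)
    (x : (obj k).carrier), (split hij).1 ((split hjk).1 x) = (split hik).1 x

/-- `P`, together with homomorphisms `φ_i : P_i → P`, is a direct limit of the
direct system `(P_i, φ_{ij})` (with directed index set): the `φ_i` are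
compatible, every element of `P` comes from some `P_i`, and everything killed
by `φ_i` is eventually killed in the system. -/
structure LimitCocone {ι : Type w} {rel : ι → ι → Prop} (D : SplitSystem.{u, v} R ι rel)
    (P : Type v) [AddCommGroup P] [LMod R P] : Type (max u w v) where
  incl : ∀ i, LinMap R (D.obj i).carrier P
  compat : ∀ {i j : ι} (h : rel i j) (x : (D.obj i).carrier),
    (incl j).1 ((D.map h).1 x) = (incl i).1 x
  exhaustive : ∀ x : P, ∃ (i : ι) (y : (D.obj i).carrier), (incl i).1 y = x
  eventually_zero : ∀ i (y : (D.obj i).carrier), (incl i).1 y = 0 →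
    ∃ j, ∃ h : rel i j, (D.map h).1 y = 0

/-- A unitary left `R`-module is locally projective if it is a direct limit of a
split direct system of finitely generated projective unitary left `R`-modules. -/
def IsLocallyProjective (P : Type v) [AddCommGroup P] [LMod R P] : Prop :=
  ∃ (ι : Type v) (rel : ι → ι → Prop),
    (∀ i, rel i i) ∧ (∀ {i j k}, rel i j → rel j k → rel i k) ∧
    Nonempty ι ∧ (∀ i j, ∃ k, rel i k ∧ rel j k) ∧
    ∃ (D : SplitSystem.{u, v} R ι rel) (_ : LimitCocone R D P),
      ∀ i, IsFG R (D.obj i).carrier ∧ CategoryTheory.Projective (D.obj i)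

variable {R}

/-- The transition maps `Ω_{ij} : End_R(P_i) → End_R(P_j)`, `α ↦ ψ_{ji} α φ_{ij}`,
of the direct system of endomorphism rings associated to a split direct system. -/
def SplitSystem.endTrans {ι : Type w} {rel : ι → ι → Prop}
    (D : SplitSystem.{u, v} R ι rel) {i j : ι} (h : rel i j)
    (a : LinMap R (D.obj i).carrier (D.obj i).carrier) :
    LinMap R (D.obj j).carrier (D.obj j).carrier :=
  ⟨fun x => (D.map h).1 (a.1 ((D.split h).1 x)),
   ⟨fun x y => by rw [(D.split h).2.map_add, a.2.map_add, (D.map h).2.map_add],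
    fun r x => by rw [(D.split h).2.map_smul, a.2.map_smul, (D.map h).2.map_smul]⟩⟩

end dirsys
/-! ### The functor `SHom_R(P,−)` and related constructions for a bimodule `P` -/

section shom

variable (R S : Type u) [NonUnitalRing R] [NonUnitalRing S]
variable (P : Type u) [AddCommGroup P] [LMod R P] [LMod Sᵐᵒᵖ P] [SMulCommClass R Sᵐᵒᵖ P]

/-- `SHom_R(P,M) = S·Hom_R(P,M)`, the largest unitary left `S`-submodule of
`Hom_R(P,M)`, as a type. -/
abbrev SHom (M : Type u) [AddCommGroup M] [LMod R M] : Type u :=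
  ↥(umax S (LinMap R P M))

variable {R S P}

/-- The action of `SHom_R(P,−)` on a homomorphism `g : M → N` (postcomposition). -/
def sHomMap {M N : Type u} [AddCommGroup M] [AddCommGroup N] [LMod R M] [LMod R N]
    (g : LinMap R M N) (α : SHom R S P M) : SHom R S P N :=
  ⟨⟨fun x => g.1 (α.1.1 x),
    ⟨fun x y => by rw [α.1.2.map_add, g.2.map_add],
     fun r x => by rw [α.1.2.map_smul, g.2.map_smul]⟩⟩,
   umax_mapsTo (C := S)
     (fun f => ⟨fun x => g.1 (f.1 x),
       ⟨fun x y => by rw [f.2.map_add, g.2.map_add],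
        fun r x => by rw [f.2.map_smul, g.2.map_smul]⟩⟩)
     (fun f f' => LinMap.ext (funext fun x => g.2.map_add _ _))
     (fun s f => LinMap.ext rfl) α.2⟩

theorem sHomMap_apply {M N : Type u} [AddCommGroup M] [AddCommGroup N] [LMod R M]
    [LMod R N] (g : LinMap R M N) (α : SHom R S P M) (x : P) :
    ((sHomMap g α).1).1 x = g.1 (α.1.1 x) := rfl

theorem sHomMap_add {M N : Type u} [AddCommGroup M] [AddCommGroup N] [LMod R M]
    [LMod R N] (g : LinMap R M N) (α β : SHom R S P M) :
    sHomMap g (α + β) = sHomMap g α + sHomMap g β :=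
  Subtype.ext (LinMap.ext (funext fun x =>
    show g.1 (α.1.1 x + β.1.1 x) = g.1 (α.1.1 x) + g.1 (β.1.1 x) from g.2.map_add _ _))

theorem sHomMap_smul {M N : Type u} [AddCommGroup M] [AddCommGroup N] [LMod R M]
    [LMod R N] (g : LinMap R M N) (s : S) (α : SHom R S P M) :
    sHomMap g (s • α) = s • sHomMap g α :=
  Subtype.ext (LinMap.ext (funext fun x => rfl))

/-- `SHom_R(P,g)` as a homomorphism of `S`-modules. -/
def sHomLin {M N : Type u} [AddCommGroup M] [AddCommGroup N] [LMod R M] [LMod R N]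
    (g : LinMap R M N) : LinMap S (SHom R S P M) (SHom R S P N) :=
  ⟨sHomMap g, ⟨sHomMap_add g, fun s α => sHomMap_smul g s α⟩⟩

variable (R S P)

/-- The functor `SHom_R(P,−)` from unitary left `R`-modules to unitary left
`S`-modules. -/
def sHomF [HasLocalUnits S] : UMod.{u, u} R ⥤ UMod.{u, u} S where
  obj M := ⟨SHom R S P M.carrier, umax_unitary⟩
  map g := sHomLin g
  map_id M := LinMap.ext (funext fun α => Subtype.ext (LinMap.ext (funext fun x => rfl)))
  map_comp f g := LinMap.ext (funext fun α => Subtype.ext (LinMap.ext (funext fun x => rfl)))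

/-- `G_P = SHom_R(P,R)`, an `S`-`R`-bimodule. -/
abbrev GP : Type u := ↥(umax S (LinMap R P R))

/-- `RHom_S(G_P, N) = R·Hom_S(G_P, N)`, as a type. -/
abbrev RHomG (N : Type u) [AddCommGroup N] [LMod S N] : Type u :=
  ↥(umax R (LinMap S (GP R S P) N))

variable {R S P}

/-- The action of `RHom_S(G_P,−)` on a homomorphism of `S`-modules. -/
def rHomGMap {N N' : Type u} [AddCommGroup N] [AddCommGroup N'] [LMod S N] [LMod S N']
    (g : LinMap S N N') (α : RHomG R S P N) : RHomG R S P N' :=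
  ⟨⟨fun β => g.1 (α.1.1 β),
    ⟨fun x y => by rw [α.1.2.map_add, g.2.map_add],
     fun s x => by rw [α.1.2.map_smul, g.2.map_smul]⟩⟩,
   umax_mapsTo (C := R)
     (fun f => ⟨fun β => g.1 (f.1 β),
       ⟨fun x y => by rw [f.2.map_add, g.2.map_add],
        fun s x => by rw [f.2.map_smul, g.2.map_smul]⟩⟩)
     (fun f f' => LinMap.ext (funext fun β => g.2.map_add _ _))
     (fun r f => LinMap.ext rfl) α.2⟩

variable (R S P)

/-- The functor `RHom_S(G_P,−)` from unitary left `S`-modules to unitary left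
`R`-modules. -/
def rHomGF [HasLocalUnits R] : UMod.{u, u} S ⥤ UMod.{u, u} R where
  obj N := ⟨RHomG R S P N.carrier, umax_unitary⟩
  map g := ⟨rHomGMap g,
    ⟨fun α β => Subtype.ext (LinMap.ext (funext fun x =>
       show g.1 (α.1.1 x + β.1.1 x) = g.1 (α.1.1 x) + g.1 (β.1.1 x) from g.2.map_add _ _)),
     fun r α => Subtype.ext (LinMap.ext (funext fun x => rfl))⟩⟩
  map_id N := LinMap.ext (funext fun α => Subtype.ext (LinMap.ext (funext fun x => rfl)))
  map_comp f g := LinMap.ext (funext fun α => Subtype.ext (LinMap.ext (funext fun x => rfl)))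

variable {R S P}

/-- The inner component of the evaluation map `γ`: for `n ∈ N` and
`β ∈ Hom_R(P,R)`, the homomorphism `P → N`, `x ↦ (x)β·n`. -/
def gammaInner {N : Type u} [AddCommGroup N] [LMod R N] (n : N) (β : LinMap R P R) :
    LinMap R P N :=
  ⟨fun x => (β.1 x) • n,
   ⟨fun x y => by rw [β.2.map_add, LMod.add_smul'],
    fun r x => by rw [β.2.map_smul, NonUnitalRing.smul_def, LMod.mul_smul']⟩⟩

theorem gammaInner_mem {N : Type u} [AddCommGroup N] [LMod R N] (n : N)
    {β : LinMap R P R} (hβ : β ∈ umax S (LinMap R P R)) :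
    gammaInner n β ∈ umax S (LinMap R P N) :=
  umax_mapsTo (C := S) (fun β => gammaInner n β)
    (fun β β' => LinMap.ext (funext fun x => LMod.add_smul' _ _ _))
    (fun s β => LinMap.ext rfl) hβ

variable (R S P)

/-- The evaluation map `γ_N : N → RHom_S(G_P, SHom_R(P,N))` (before checking that
its values lie in the unitary part `R·Hom_S(G_P, SHom_R(P,N))`):
`n ↦ (β ↦ (x ↦ (x)β·n))`. -/
def gammaFun (N : Type u) [AddCommGroup N] [LMod R N] (n : N) :
    LinMap S (GP R S P) (SHom R S P N) :=
  ⟨fun β => ⟨gammaInner n β.1, gammaInner_mem n β.2⟩,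
   ⟨fun β β' => Subtype.ext (LinMap.ext (funext fun x => LMod.add_smul' _ _ _)),
    fun s β => Subtype.ext (LinMap.ext rfl)⟩⟩

/-- The `s`-trace `sTr(P,M) = Σ_{g ∈ SHom_R(P,M)} Im g` of `P` in `M`. -/
def sTrSub (M : Type u) [AddCommGroup M] [LMod R M] : AddSubgroup M :=
  AddSubgroup.closure {m : M | ∃ f : LinMap R P M, f ∈ umax S (LinMap R P M) ∧ ∃ x : P, m = f.1 x}

/-- `st_P(M) = 0`: the only `R`-submodule `K ⊆ M` with `SHom_R(P,K) = 0` is the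
zero submodule (equivalently, the sum of all such submodules is zero). -/
def stPZero (M : Type u) [AddCommGroup M] [LMod R M] : Prop :=
  ∀ K : AddSubgroup M, (∀ (r : R) (x : M), x ∈ K → r • x ∈ K) →
    (∀ (s : S) (f : LinMap R P M), (∀ x : P, f.1 x ∈ K) → s • f = 0) →
    ∀ m ∈ K, m = 0

/-- `SHom_R(P,X) = 0`. -/
def sHomZero (X : Type u) [AddCommGroup X] [LMod R X] : Prop :=
  ∀ f : LinMap R P X, f ∈ umax S (LinMap R P X) → f = 0

end shom
/-! ### Bimodules, dual hom functors, reflexivity, Morita duality bimodules,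
finiteness conditions -/

section bimod

variable (R S : Type u) [NonUnitalRing R] [NonUnitalRing S]

/-- A bundled `R`-`S`-bimodule over non-unital rings. -/
structure BimodLU : Type (u + 1) where
  carrier : Type u
  [grp : AddCommGroup carrier]
  [lmod : LMod R carrier]
  [rmod : LMod Sᵐᵒᵖ carrier]
  [comm : SMulCommClass R Sᵐᵒᵖ carrier]
  [comm' : SMulCommClass Sᵐᵒᵖ R carrier]

attribute [instance] BimodLU.grp BimodLU.lmod BimodLU.rmod BimodLU.comm BimodLU.comm'

variable (U : Type u) [AddCommGroup U] [LMod R U] [LMod Sᵐᵒᵖ U] [SMulCommClass R Sᵐᵒᵖ U]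
  [SMulCommClass Sᵐᵒᵖ R U]

/-- The canonical map `μ : S → End_R(U)`, `s ↦ (x ↦ x·s)`. -/
def muMap (s : S) : LinMap R U U :=
  ⟨fun x => op s • x,
   ⟨fun x y => LMod.smul_add' (op s) x y, fun r x => (smul_comm r (op s) x).symm⟩⟩

/-- The canonical map `λ : R → End_S(U)`, `r ↦ (x ↦ r·x)`. -/
def lambdaMap (r : R) : LinMap Sᵐᵒᵖ U U :=
  ⟨fun x => r • x,
   ⟨fun x y => LMod.smul_add' r x y, fun s x => smul_comm r s x⟩⟩

/-- `Hom_R(M,U)S`, the largest unitary right `S`-submodule of `Hom_R(M,U)`,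
as a type (a right `S`-module, i.e. a left `Sᵐᵒᵖ`-module). -/
abbrev DHomL (M : Type u) [AddCommGroup M] [LMod R M] : Type u :=
  ↥(umax Sᵐᵒᵖ (LinMap R M U))

/-- `RHom_S(N,U)`, the largest unitary left `R`-submodule of `Hom_S(N,U)`
for a right `S`-module `N`, as a type. -/
abbrev DHomR (N : Type u) [AddCommGroup N] [LMod Sᵐᵒᵖ N] : Type u :=
  ↥(umax R (LinMap Sᵐᵒᵖ N U))

variable {R S U}

/-- Action of the contravariant functor `Hom_R(−,U)S` on morphisms
(precomposition). -/
def dHomLMap {M N : Type u} [AddCommGroup M] [AddCommGroup N] [LMod R M] [LMod R N]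
    (f : LinMap R M N) (α : DHomL R S U N) : DHomL R S U M :=
  ⟨⟨fun x => α.1.1 (f.1 x),
    ⟨fun x y => by rw [f.2.map_add, α.1.2.map_add],
     fun r x => by rw [f.2.map_smul, α.1.2.map_smul]⟩⟩,
   umax_mapsTo (C := Sᵐᵒᵖ)
     (fun g => ⟨fun x => g.1 (f.1 x),
       ⟨fun x y => by rw [f.2.map_add, g.2.map_add],
        fun r x => by rw [f.2.map_smul, g.2.map_smul]⟩⟩)
     (fun g g' => LinMap.ext rfl) (fun s g => LinMap.ext rfl) α.2⟩

/-- Action of the contravariant functor `RHom_S(−,U)` on morphisms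
(precomposition). -/
def dHomRMap {M N : Type u} [AddCommGroup M] [AddCommGroup N] [LMod Sᵐᵒᵖ M]
    [LMod Sᵐᵒᵖ N] (f : LinMap Sᵐᵒᵖ M N) (α : DHomR R S U N) : DHomR R S U M :=
  ⟨⟨fun x => α.1.1 (f.1 x),
    ⟨fun x y => by rw [f.2.map_add, α.1.2.map_add],
     fun s x => by rw [f.2.map_smul, α.1.2.map_smul]⟩⟩,
   umax_mapsTo (C := R)
     (fun g => ⟨fun x => g.1 (f.1 x),
       ⟨fun x y => by rw [f.2.map_add, g.2.map_add],
        fun s x => by rw [f.2.map_smul, g.2.map_smul]⟩⟩)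
     (fun g g' => LinMap.ext rfl) (fun r g => LinMap.ext rfl) α.2⟩

variable (R S U)

/-- The contravariant functor `Hom_R(−,U)S` from unitary left `R`-modules to
unitary right `S`-modules. -/
def dualL [HasLocalUnits S] : (UMod.{u, u} R)ᵒᵖ ⥤ UMod.{u, u} Sᵐᵒᵖ where
  obj M := ⟨DHomL R S U M.unop.carrier, umax_unitary⟩
  map f := ⟨dHomLMap f.unop,
    ⟨fun α β => Subtype.ext (LinMap.ext (funext fun x => rfl)),
     fun s α => Subtype.ext (LinMap.ext (funext fun x => rfl))⟩⟩
  map_id M := LinMap.ext (funext fun α => Subtype.ext (LinMap.ext (funext fun x => rfl)))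
  map_comp f g := LinMap.ext (funext fun α => Subtype.ext (LinMap.ext (funext fun x => rfl)))

/-- The contravariant functor `RHom_S(−,U)` from unitary right `S`-modules to
unitary left `R`-modules. -/
def dualR [HasLocalUnits R] : (UMod.{u, u} Sᵐᵒᵖ)ᵒᵖ ⥤ UMod.{u, u} R where
  obj N := ⟨DHomR R S U N.unop.carrier, umax_unitary⟩
  map f := ⟨dHomRMap f.unop,
    ⟨fun α β => Subtype.ext (LinMap.ext (funext fun x => rfl)),
     fun r α => Subtype.ext (LinMap.ext (funext fun x => rfl))⟩⟩
  map_id N := LinMap.ext (funext fun α => Subtype.ext (LinMap.ext (funext fun x => rfl)))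
  map_comp f g := LinMap.ext (funext fun α => Subtype.ext (LinMap.ext (funext fun x => rfl)))

/-- The underlying function of the evaluation map
`φ_X : X → RHom_S(Hom_R(X,U)S, U)`, `(x)φ_X : β ↦ (x)β`. -/
def evalFunL (X : Type u) [AddCommGroup X] [LMod R X] (x : X) :
    LinMap Sᵐᵒᵖ (DHomL R S U X) U :=
  ⟨fun β => β.1.1 x, ⟨fun β β' => rfl, fun s β => rfl⟩⟩

/-- A unitary left `R`-module `X` is `U`-reflexive: the evaluation map
`φ_X : X → RHom_S(Hom_R(X,U)S, U)` is an isomorphism. -/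
def IsLReflexive (X : Type u) [AddCommGroup X] [LMod R X] : Prop :=
  ∃ h : ∀ x : X, evalFunL R S U X x ∈ umax R (LinMap Sᵐᵒᵖ (DHomL R S U X) U),
    Function.Bijective (fun x : X => (⟨evalFunL R S U X x, h x⟩ : DHomR R S U (DHomL R S U X)))

/-- The underlying function of the evaluation map
`ψ_Y : Y → Hom_R(RHom_S(Y,U),U)S`, `ψ_Y(y) : α ↦ α(y)`. -/
def evalFunR (Y : Type u) [AddCommGroup Y] [LMod Sᵐᵒᵖ Y] (y : Y) :
    LinMap R (DHomR R S U Y) U :=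
  ⟨fun α => α.1.1 y, ⟨fun α α' => rfl, fun r α => rfl⟩⟩

/-- A unitary right `S`-module `Y` is `U`-reflexive: the evaluation map
`ψ_Y : Y → Hom_R(RHom_S(Y,U),U)S` is an isomorphism. -/
def IsRReflexive (Y : Type u) [AddCommGroup Y] [LMod Sᵐᵒᵖ Y] : Prop :=
  ∃ h : ∀ y : Y, evalFunR R S U Y y ∈ umax Sᵐᵒᵖ (LinMap R (DHomR R S U Y) U),
    Function.Bijective (fun y : Y => (⟨evalFunR R S U Y y, h y⟩ : DHomL R S U (DHomR R S U Y)))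

/-- Properties (I) and (II) of a Morita duality bimodule: `U` is the direct
limit of a split direct system of finitely generated injective unitary left
`R`-modules whose members form a cogenerating set for the category of unitary
left `R`-modules, and `μ : S → End_R(U)` is a monomorphism whose image is
exactly the set of endomorphisms factoring through one of the induced
projections. -/
def SatisfiesI_II : Prop :=
  ∃ (ι : Type u) (rel : ι → ι → Prop),
    (∀ i, rel i i) ∧ (∀ {i j k}, rel i j → rel j k → rel i k) ∧
    Nonempty ι ∧ (∀ i j, ∃ k, rel i k ∧ rel j k) ∧
    ∃ (D : SplitSystem.{u, u} R ι rel) (c : LimitCocone R D U)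
      (proj : ∀ i, LinMap R U (D.obj i).carrier),
      (∀ i, IsFG R (D.obj i).carrier ∧ CategoryTheory.Injective (D.obj i)) ∧
      IsCogenSet R {M | ∃ i, M = D.obj i} ∧
      (∀ i (x : (D.obj i).carrier), (proj i).1 ((c.incl i).1 x) = x) ∧
      (∀ {i j} (h : rel i j) (x : U), (D.split h).1 ((proj j).1 x) = (proj i).1 x) ∧
      Function.Injective (muMap R S U) ∧
      Set.range (muMap R S U) =
        {g : LinMap R U U | ∃ (i : ι) (γ : LinMap R (D.obj i).carrier U),
          g.1 = fun x => γ.1 ((proj i).1 x)}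

/-- Properties (III) and (IV) of a Morita duality bimodule (the right-module
side, dual to (I) and (II)). -/
def SatisfiesIII_IV : Prop :=
  ∃ (ι : Type u) (rel : ι → ι → Prop),
    (∀ i, rel i i) ∧ (∀ {i j k}, rel i j → rel j k → rel i k) ∧
    Nonempty ι ∧ (∀ i j, ∃ k, rel i k ∧ rel j k) ∧
    ∃ (D : SplitSystem.{u, u} Sᵐᵒᵖ ι rel) (c : LimitCocone Sᵐᵒᵖ D U)
      (proj : ∀ i, LinMap Sᵐᵒᵖ U (D.obj i).carrier),
      (∀ i, IsFG Sᵐᵒᵖ (D.obj i).carrier ∧ CategoryTheory.Injective (D.obj i)) ∧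
      IsCogenSet Sᵐᵒᵖ {M | ∃ i, M = D.obj i} ∧
      (∀ i (x : (D.obj i).carrier), (proj i).1 ((c.incl i).1 x) = x) ∧
      (∀ {i j} (h : rel i j) (x : U), (D.split h).1 ((proj j).1 x) = (proj i).1 x) ∧
      Function.Injective (lambdaMap R S U) ∧
      Set.range (lambdaMap R S U) =
        {g : LinMap Sᵐᵒᵖ U U | ∃ (i : ι) (γ : LinMap Sᵐᵒᵖ (D.obj i).carrier U),
          g.1 = fun x => γ.1 ((proj i).1 x)}

/-- A Morita duality `R`-`S`-bimodule. -/
def IsMoritaDualityBimod : Prop :=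
  IsUnitary R U ∧ IsUnitary Sᵐᵒᵖ U ∧ SatisfiesI_II R S U ∧ SatisfiesIII_IV R S U

end bimod

section cats

variable (R : Type u) [NonUnitalRing R]

/-- The category of finitely generated unitary left `R`-modules. -/
abbrev FGMod := CategoryTheory.ObjectProperty.FullSubcategory (fun M : UMod.{u, u} R => IsFG R M.carrier)

/-- The category of finitely generated injective unitary left `R`-modules. -/
abbrev InjFGMod := CategoryTheory.ObjectProperty.FullSubcategory
  (fun M : UMod.{u, u} R => IsFG R M.carrier ∧ CategoryTheory.Injective M)

/-- The category of finitely generated projective unitary left `R`-modules. -/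
abbrev ProjFGMod := CategoryTheory.ObjectProperty.FullSubcategory
  (fun M : UMod.{u, u} R => IsFG R M.carrier ∧ CategoryTheory.Projective M)

/-- There is a duality (an additive contravariant equivalence) between the
categories of finitely generated unitary left `R`-modules and finitely
generated unitary right `S`-modules. -/
def ExistsFGDuality (R S : Type u) [NonUnitalRing R] [NonUnitalRing S] : Prop :=
  ∃ F : (FGMod R)ᵒᵖ ⥤ FGMod Sᵐᵒᵖ, F.Additive ∧ F.IsEquivalence

/-- Bundled ring with local units. -/
structure RingLU : Type (u + 1) where
  carrier : Type u
  [ring : NonUnitalRing carrier]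
  [lu : HasLocalUnits carrier]

attribute [instance] RingLU.ring RingLU.lu

/-- A ring with local units is left Morita if there is a ring `R'` with local
units and a duality from finitely generated unitary left `R`-modules to
finitely generated unitary right `R'`-modules. -/
def IsLeftMorita : Prop :=
  ∃ R' : RingLU.{u}, ExistsFGDuality R R'.carrier

/-- `R` is left locally finite: every finitely generated unitary left
`R`-module has finite length (equivalently, the lengths of chains of
submodules of such a module are bounded). -/
def IsLeftLocallyFinite : Prop :=
  ∀ (M : Type u) [AddCommGroup M] [LMod R M], IsUnitary R M → IsFG R M →
    ∃ n : ℕ, ∀ c : Fin (n + 1) → AddSubgroup M,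
      (∀ i (r : R) x, x ∈ c i → r • x ∈ c i) →
      ¬(∀ i : Fin n, c i.castSucc < c i.succ)

/-- `R` is left locally noetherian: every finitely generated unitary left
`R`-module is noetherian. -/
def IsLeftLocallyNoetherian : Prop :=
  ∀ (M : Type u) [AddCommGroup M] [LMod R M], IsUnitary R M → IsFG R M →
    ∀ c : ℕ → AddSubgroup M, (∀ i (r : R) x, x ∈ c i → r • x ∈ c i) →
      (∀ i, c i ≤ c (i + 1)) → ∃ n, ∀ m, n ≤ m → c m = c n

end cats

section principal

variable (R : Type u) [NonUnitalRing R]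

/-- The principal left ideal `Re` of a non-unital ring, for an element `e`. -/
def principalLeft (e : R) : AddSubgroup R where
  carrier := {y : R | ∃ r : R, y = r * e}
  add_mem' := by
    rintro a b ⟨r, hr⟩ ⟨s, hs⟩
    exact ⟨r + s, by rw [hr, hs, add_mul]⟩
  zero_mem' := ⟨0, by rw [zero_mul]⟩
  neg_mem' := by
    rintro a ⟨r, hr⟩
    exact ⟨-r, by rw [hr, neg_mul]⟩

instance (e : R) : LMod R ↥(principalLeft R e) where
  smul r y := ⟨r * y.1, by obtain ⟨s, hs⟩ := y.2; exact ⟨r * s, by rw [hs, mul_assoc]⟩⟩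
  smul_add' r m n := Subtype.ext (mul_add r m.1 n.1)
  add_smul' r s m := Subtype.ext (add_mul r s m.1)
  mul_smul' r s m := Subtype.ext (mul_assoc r s m.1)

/-- The principal right ideal `fS` of a non-unital ring, as a right module
(left module over the opposite ring). -/
def principalRight (f : R) : AddSubgroup R where
  carrier := {y : R | ∃ s : R, y = f * s}
  add_mem' := by
    rintro a b ⟨r, hr⟩ ⟨s, hs⟩
    exact ⟨r + s, by rw [hr, hs, mul_add]⟩
  zero_mem' := ⟨0, by rw [mul_zero]⟩
  neg_mem' := by
    rintro a ⟨r, hr⟩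
    exact ⟨-r, by rw [hr, mul_neg]⟩

instance (f : R) : LMod Rᵐᵒᵖ ↥(principalRight R f) where
  smul s y := ⟨y.1 * s.unop, by
    obtain ⟨t, ht⟩ := y.2; exact ⟨t * s.unop, by rw [ht, mul_assoc]⟩⟩
  smul_add' s m n := Subtype.ext (add_mul m.1 n.1 s.unop)
  add_smul' s t m := Subtype.ext (mul_add m.1 s.unop t.unop)
  mul_smul' s t m := Subtype.ext (mul_assoc m.1 t.unop s.unop).symm

end principal

section restr

variable (R S : Type u) [NonUnitalRing R] [NonUnitalRing S] [HasLocalUnits R] [HasLocalUnits S]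
variable (U : Type u) [AddCommGroup U] [LMod R U] [LMod Sᵐᵒᵖ U] [SMulCommClass R Sᵐᵒᵖ U]
  [SMulCommClass Sᵐᵒᵖ R U]

/-- The restriction of the contravariant functor `Hom_R(−,U)S` to finitely
generated modules, given that it preserves finite generation. -/
def dualLRestr (hFG : ∀ X : UMod.{u, u} R, IsFG R X.carrier →
    IsFG Sᵐᵒᵖ ((dualL R S U).obj (Opposite.op X)).carrier) :
    (FGMod R)ᵒᵖ ⥤ FGMod Sᵐᵒᵖ :=
  CategoryTheory.ObjectProperty.lift _
    ((CategoryTheory.ObjectProperty.ι _).op ⋙ dualL R S U)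
    (fun X => hFG X.unop.obj X.unop.property)

/-- The restriction of the contravariant functor `RHom_S(−,U)` to finitely
generated modules, given that it preserves finite generation. -/
def dualRRestr (hFG : ∀ Y : UMod.{u, u} Sᵐᵒᵖ, IsFG Sᵐᵒᵖ Y.carrier →
    IsFG R ((dualR R S U).obj (Opposite.op Y)).carrier) :
    (FGMod Sᵐᵒᵖ)ᵒᵖ ⥤ FGMod R :=
  CategoryTheory.ObjectProperty.lift _
    ((CategoryTheory.ObjectProperty.ι _).op ⋙ dualR R S U)
    (fun Y => hFG Y.unop.obj Y.unop.property)

end restr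
/-! ### Direct sums of modules over non-unital rings -/

section dfinsupp

variable {R : Type u} [NonUnitalRing R] {ι : Type v} {β : ι → Type w}
  [∀ i, AddCommGroup (β i)] [∀ i, LMod R (β i)]

/-- Pointwise scalar action on a direct sum. -/
def dfinsuppSMul (r : R) (f : Π₀ i, β i) : Π₀ i, β i :=
  f.mapRange (fun _ x => r • x) (fun _ => LMod.smul_zero' r)

theorem dfinsuppSMul_apply (r : R) (f : Π₀ i, β i) (i : ι) :
    dfinsuppSMul r f i = r • f i := DFinsupp.mapRange_apply _ _ f i

instance DFinsupp.instLMod : LMod R (Π₀ i, β i) where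
  smul := dfinsuppSMul
  smul_add' r f g := by
    ext i
    show dfinsuppSMul r (f + g) i = (dfinsuppSMul r f + dfinsuppSMul r g) i
    rw [DFinsupp.add_apply, dfinsuppSMul_apply, dfinsuppSMul_apply, dfinsuppSMul_apply,
      DFinsupp.add_apply]
    exact LMod.smul_add' r (f i) (g i)
  add_smul' r s f := by
    ext i
    show dfinsuppSMul (r + s) f i = (dfinsuppSMul r f + dfinsuppSMul s f) i
    rw [DFinsupp.add_apply, dfinsuppSMul_apply, dfinsuppSMul_apply, dfinsuppSMul_apply]
    exact LMod.add_smul' r s (f i)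
  mul_smul' r s f := by
    ext i
    show dfinsuppSMul (r * s) f i = dfinsuppSMul r (dfinsuppSMul s f) i
    rw [dfinsuppSMul_apply, dfinsuppSMul_apply, dfinsuppSMul_apply]
    exact LMod.mul_smul' r s (f i)

@[simp] theorem DFinsupp.lmod_smul_apply (r : R) (f : Π₀ i, β i) (i : ι) :
    (r • f) i = r • f i := dfinsuppSMul_apply r f i

end dfinsupp
/-! ### Miscellaneous helpers: submodule stability, `Pf`, traces, sums -/

section extra

variable {R : Type u} [NonUnitalRing R] {M : Type v} [AddCommGroup M] [LMod R M]

theorem closure_smul_stable {s : Set M}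
    (h : ∀ (r : R) (x : M), x ∈ s → r • x ∈ AddSubgroup.closure s) (r : R) {x : M}
    (hx : x ∈ AddSubgroup.closure s) : r • x ∈ AddSubgroup.closure s := by
  induction hx using AddSubgroup.closure_induction with
  | mem y hy => exact h r y hy
  | zero => rw [LMod.smul_zero']; exact AddSubgroup.zero_mem _
  | add y z hy hz ihy ihz => rw [LMod.smul_add']; exact AddSubgroup.add_mem _ ihy ihz
  | neg y hy ihy => rw [LMod.smul_neg']; exact AddSubgroup.neg_mem _ ihy

end extra

section pe

variable (R S : Type u) [NonUnitalRing R] [NonUnitalRing S]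
variable (P : Type u) [AddCommGroup P] [LMod R P] [LMod Sᵐᵒᵖ P] [SMulCommClass R Sᵐᵒᵖ P]

/-- The submodule `Pf = {x·f | x ∈ P}` of `P`, for `f ∈ S`. -/
def peSub (f : S) : AddSubgroup P where
  carrier := Set.range (fun x : P => (op f : Sᵐᵒᵖ) • x)
  add_mem' := by
    rintro a b ⟨x, rfl⟩ ⟨y, rfl⟩
    exact ⟨x + y, LMod.smul_add' (op f) x y⟩
  zero_mem' := ⟨0, LMod.smul_zero' _⟩
  neg_mem' := by
    rintro a ⟨x, rfl⟩
    exact ⟨-x, LMod.smul_neg' (op f) x⟩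

instance (f : S) : LMod R ↥(peSub S P f) where
  smul r y := ⟨r • y.1, by
    obtain ⟨x, hx⟩ := y.2
    exact ⟨r • x, by rw [← hx, smul_comm]⟩⟩
  smul_add' r m n := Subtype.ext (LMod.smul_add' r m.1 n.1)
  add_smul' r s m := Subtype.ext (LMod.add_smul' r s m.1)
  mul_smul' r s m := Subtype.ext (LMod.mul_smul' r s m.1)

variable {R S P} in
theorem sTrSub_smul_stable {M : Type u} [AddCommGroup M] [LMod R M] (r : R) {m : M}
    (hm : m ∈ sTrSub R S P M) : r • m ∈ sTrSub R S P M := by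
  refine closure_smul_stable (fun r' x hx => ?_) r hm
  obtain ⟨g, hg, y, rfl⟩ := hx
  exact AddSubgroup.subset_closure ⟨g, hg, r' • y, (g.2.map_smul r' y).symm⟩

instance (M : Type u) [AddCommGroup M] [LMod R M] : LMod R ↥(sTrSub R S P M) where
  smul r y := ⟨r • y.1, sTrSub_smul_stable r y.2⟩
  smul_add' r m n := Subtype.ext (LMod.smul_add' r m.1 n.1)
  add_smul' r s m := Subtype.ext (LMod.add_smul' r s m.1)
  mul_smul' r s m := Subtype.ext (LMod.mul_smul' r s m.1)

end pe

section sum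

/-- Summation over a direct sum against a family of additive maps
(the canonical map `⊕_I M_i → N`). -/
noncomputable def dfinsuppSum {ι : Type u} {β : ι → Type v} [∀ i, AddCommGroup (β i)]
    {γ : Type w} [AddCommGroup γ] (f : ∀ i, β i →+ γ) (x : Π₀ i, β i) : γ :=
  letI := Classical.decEq ι
  DFinsupp.sumAddHom f x

end sum


/-! ### Auxiliary machinery for the main theorem -/

section mainaux1

theorem LMod.neg_smul' {R : Type u} [NonUnitalRing R] {M : Type v} [AddCommGroup M]
    [LMod R M] (r : R) (m : M) : (-r) • m = -(r • m) := by
  have h : r • m + (-r) • m = 0 := by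
    rw [← LMod.add_smul', add_neg_cancel, LMod.zero_smul']
  exact eq_neg_of_add_eq_zero_right h

theorem LMod.smul_sum {R : Type u} [NonUnitalRing R] {M : Type v} [AddCommGroup M]
    [LMod R M] (r : R) {κ : Type w} (s : Finset κ) (f : κ → M) :
    r • (∑ i ∈ s, f i) = ∑ i ∈ s, r • f i := by
  classical
  induction s using Finset.induction with
  | empty => simpa using LMod.smul_zero' r
  | @insert a t ha ih =>
      rw [Finset.sum_insert ha, Finset.sum_insert ha, LMod.smul_add', ih]

theorem IsLHom.map_sum {R : Type u} [NonUnitalRing R] {M : Type v} {N : Type w}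
    [AddCommGroup M] [AddCommGroup N] [LMod R M] [LMod R N] {f : M → N}
    (hf : IsLHom R f) {κ : Type*} (s : Finset κ) (g : κ → M) :
    f (∑ i ∈ s, g i) = ∑ i ∈ s, f (g i) := by
  classical
  induction s using Finset.induction with
  | empty => simpa using hf.map_zero
  | @insert a t ha ih =>
      rw [Finset.sum_insert ha, Finset.sum_insert ha, hf.map_add, ih]

/-- In a module which is unitary over a ring with local units, every element has an
idempotent local unit. -/
theorem exists_idem_smul {C : Type u} [NonUnitalRing C] [HasLocalUnits C]
    {M : Type v} [AddCommGroup M] [LMod C M] (hu : IsUnitary C M) (m : M) :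
    ∃ e : C, e * e = e ∧ e • m = m := by
  have hm := hu m
  induction hm using AddSubgroup.closure_induction with
  | mem x hx =>
      obtain ⟨c, n, rfl⟩ := hx
      obtain ⟨e, he, h⟩ := HasLocalUnits.exists_unit {c}
      exact ⟨e, he, by rw [← LMod.mul_smul', (h c (Finset.mem_singleton_self c)).1]⟩
  | zero =>
      obtain ⟨e, he, -⟩ := HasLocalUnits.exists_unit (∅ : Finset C)
      exact ⟨e, he, LMod.smul_zero' e⟩
  | add x y hx hy ihx ihy =>
      obtain ⟨e₁, he₁, h₁⟩ := ihx
      obtain ⟨e₂, he₂, h₂⟩ := ihy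
      classical
      obtain ⟨e, he, h⟩ := HasLocalUnits.exists_unit {e₁, e₂}
      have he₁' : e * e₁ = e₁ := (h e₁ (by simp)).1
      have he₂' : e * e₂ = e₂ := (h e₂ (by simp)).1
      have hx' : e • x = x := by rw [← h₁, ← LMod.mul_smul', he₁', h₁]
      have hy' : e • y = y := by rw [← h₂, ← LMod.mul_smul', he₂', h₂]
      exact ⟨e, he, by rw [LMod.smul_add', hx', hy']⟩
  | neg x hx ihx =>
      obtain ⟨e, he, h⟩ := ihx
      exact ⟨e, he, by rw [LMod.smul_neg', h]⟩

theorem exists_idem_smul_list {C : Type u} [NonUnitalRing C] [HasLocalUnits C]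
    {M : Type v} [AddCommGroup M] [LMod C M] (hu : IsUnitary C M) (l : List M) :
    ∃ e : C, e * e = e ∧ ∀ m ∈ l, e • m = m := by
  classical
  induction l with
  | nil =>
      obtain ⟨e, he, -⟩ := HasLocalUnits.exists_unit (∅ : Finset C)
      exact ⟨e, he, by simp⟩
  | cons m l ih =>
      obtain ⟨e₁, he₁, h₁⟩ := exists_idem_smul hu m
      obtain ⟨e₂, he₂, h₂⟩ := ih
      obtain ⟨e, he, h⟩ := HasLocalUnits.exists_unit {e₁, e₂}
      have he₁' : e * e₁ = e₁ := (h e₁ (by simp)).1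
      have he₂' : e * e₂ = e₂ := (h e₂ (by simp)).1
      refine ⟨e, he, ?_⟩
      intro x hx
      rcases List.mem_cons.mp hx with hx | hx
      · subst hx; rw [← h₁, ← LMod.mul_smul', he₁', h₁]
      · rw [← h₂ x hx, ← LMod.mul_smul', he₂', h₂ x hx]

/-- A common two-sided idempotent unit for a finite list of ring elements. -/
theorem exists_idem_unit_list {C : Type u} [NonUnitalRing C] [HasLocalUnits C]
    (l : List C) : ∃ e : C, e * e = e ∧ ∀ c ∈ l, e * c = c ∧ c * e = c := by
  classical
  obtain ⟨e, he, h⟩ := HasLocalUnits.exists_unit l.toFinset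
  exact ⟨e, he, fun c hc => h c (List.mem_toFinset.mpr hc)⟩

theorem LMod.sum_smul' {R : Type u} [NonUnitalRing R] {M : Type v} [AddCommGroup M]
    [LMod R M] {κ : Type w} (s : Finset κ) (r : κ → R) (m : M) :
    (∑ i ∈ s, r i) • m = ∑ i ∈ s, (r i) • m := by
  classical
  induction s using Finset.induction with
  | empty => simpa using LMod.zero_smul' m
  | @insert a t ha ih =>
      rw [Finset.sum_insert ha, Finset.sum_insert ha, LMod.add_smul', ih]

theorem linMap_sum_apply {R : Type u} [NonUnitalRing R] {M : Type v} {M' : Type w}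
    [AddCommGroup M] [AddCommGroup M'] [LMod R M] [LMod R M'] {κ : Type*}
    (s : Finset κ) (f : κ → LinMap R M M') (x : M) :
    (∑ l ∈ s, f l).1 x = ∑ l ∈ s, (f l).1 x := by
  classical
  induction s using Finset.induction with
  | empty => rfl
  | @insert a t ha ih =>
      rw [Finset.sum_insert ha, Finset.sum_insert ha, LinMap.add_apply, ih]

end mainaux1


section mainaux2

theorem IsLHom.map_sub {R : Type u} [NonUnitalRing R] {M : Type v} {N : Type w}
    [AddCommGroup M] [AddCommGroup N] [LMod R M] [LMod R N] {f : M → N}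
    (hf : IsLHom R f) (x y : M) : f (x - y) = f x - f y := by
  rw [sub_eq_add_neg, hf.map_add, hf.map_neg, sub_eq_add_neg]

variable {R : Type u} [NonUnitalRing R] {P : Type u} [AddCommGroup P] [LMod R P]
variable {ι : Type u} {rel : ι → ι → Prop}

theorem proj_indep
    (htrans : ∀ {i j k}, rel i j → rel j k → rel i k)
    (hdir : ∀ i j, ∃ k, rel i k ∧ rel j k)
    (D : SplitSystem.{u, u} R ι rel) (c : LimitCocone R D P)
    {i j₁ j₂ k₁ k₂ : ι} (h₁ : rel j₁ k₁) (hi₁ : rel i k₁)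
    (h₂ : rel j₂ k₂) (hi₂ : rel i k₂)
    {y₁ : (D.obj j₁).carrier} {y₂ : (D.obj j₂).carrier}
    (hy : (c.incl j₁).1 y₁ = (c.incl j₂).1 y₂) :
    (D.split hi₁).1 ((D.map h₁).1 y₁) = (D.split hi₂).1 ((D.map h₂).1 y₂) := by
  obtain ⟨l, hk₁l, hk₂l⟩ := hdir k₁ k₂
  set u₁ := (D.map (htrans h₁ hk₁l)).1 y₁ with hu₁
  set u₂ := (D.map (htrans h₂ hk₂l)).1 y₂ with hu₂
  have hincl : (c.incl l).1 (u₁ - u₂) = 0 := by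
    have e1 : (c.incl l).1 u₁ = (c.incl j₁).1 y₁ := c.compat _ y₁
    have e2 : (c.incl l).1 u₂ = (c.incl j₂).1 y₂ := c.compat _ y₂
    rw [(c.incl l).2.map_sub, e1, e2, hy, sub_self]
  obtain ⟨m, hlm, hzero⟩ := c.eventually_zero l _ hincl
  have hmm : (D.map hlm).1 u₁ = (D.map hlm).1 u₂ := by
    rw [(D.map hlm).2.map_sub] at hzero
    exact sub_eq_zero.mp hzero
  have key : ∀ (j k : ι) (hjk : rel j k) (hik : rel i k) (y : (D.obj j).carrier)
      (hkm : rel k m) (him : rel i m),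
      (D.split hik).1 ((D.map hjk).1 y) =
        (D.split him).1 ((D.map hkm).1 ((D.map hjk).1 y)) := by
    intro j k hjk hik y hkm him
    rw [← D.split_split hik hkm him, D.split_map]
  have him : rel i m := htrans hi₁ (htrans hk₁l hlm)
  have e₁ : (D.split hi₁).1 ((D.map h₁).1 y₁) = (D.split him).1 ((D.map hlm).1 u₁) := by
    rw [key j₁ k₁ h₁ hi₁ y₁ (htrans hk₁l hlm) him]
    congr 1
    rw [hu₁, D.map_map h₁ (htrans hk₁l hlm) (htrans h₁ (htrans hk₁l hlm)), ← D.map_map (htrans h₁ hk₁l) hlm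
      (htrans (htrans h₁ hk₁l) hlm)]
  have e₂ : (D.split hi₂).1 ((D.map h₂).1 y₂) = (D.split him).1 ((D.map hlm).1 u₂) := by
    rw [key j₂ k₂ h₂ hi₂ y₂ (htrans hk₂l hlm) him]
    congr 1
    rw [hu₂, D.map_map h₂ (htrans hk₂l hlm) (htrans h₂ (htrans hk₂l hlm)), ← D.map_map (htrans h₂ hk₂l) hlm
      (htrans (htrans h₂ hk₂l) hlm)]
  rw [e₁, e₂, hmm]

/-- The projection `π_i : P → P_i` associated to a split direct system with limit `P`. -/
noncomputable def projFun
    (htrans : ∀ {i j k}, rel i j → rel j k → rel i k)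
    (hdir : ∀ i j, ∃ k, rel i k ∧ rel j k)
    (D : SplitSystem.{u, u} R ι rel) (c : LimitCocone R D P) (i : ι) (x : P) :
    (D.obj i).carrier :=
  (D.split (hdir i (c.exhaustive x).choose).choose_spec.1).1
    ((D.map (hdir i (c.exhaustive x).choose).choose_spec.2).1
      (c.exhaustive x).choose_spec.choose)

theorem projFun_eq
    (htrans : ∀ {i j k}, rel i j → rel j k → rel i k)
    (hdir : ∀ i j, ∃ k, rel i k ∧ rel j k)
    (D : SplitSystem.{u, u} R ι rel) (c : LimitCocone R D P) {i j k : ι}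
    (hjk : rel j k) (hik : rel i k) (y : (D.obj j).carrier) {x : P}
    (hy : (c.incl j).1 y = x) :
    projFun @htrans hdir D c i x = (D.split hik).1 ((D.map hjk).1 y) := by
  apply proj_indep @htrans hdir D c
  rw [(c.exhaustive x).choose_spec.choose_spec, hy]

theorem projFun_incl
    (htrans : ∀ {i j k}, rel i j → rel j k → rel i k)
    (hdir : ∀ i j, ∃ k, rel i k ∧ rel j k)
    (D : SplitSystem.{u, u} R ι rel) (c : LimitCocone R D P) (i : ι)
    (y : (D.obj i).carrier) :
    projFun @htrans hdir D c i ((c.incl i).1 y) = y := by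
  obtain ⟨k, hik, -⟩ := hdir i i
  rw [projFun_eq @htrans hdir D c hik hik y rfl, D.split_map]

theorem projFun_add
    (htrans : ∀ {i j k}, rel i j → rel j k → rel i k)
    (hdir : ∀ i j, ∃ k, rel i k ∧ rel j k)
    (D : SplitSystem.{u, u} R ι rel) (c : LimitCocone R D P) (i : ι) (x₁ x₂ : P) :
    projFun @htrans hdir D c i (x₁ + x₂) =
      projFun @htrans hdir D c i x₁ + projFun @htrans hdir D c i x₂ := by
  obtain ⟨j₁, y₁, hy₁⟩ := c.exhaustive x₁
  obtain ⟨j₂, y₂, hy₂⟩ := c.exhaustive x₂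
  obtain ⟨j, hj₁, hj₂⟩ := hdir j₁ j₂
  have hy₁' : (c.incl j).1 ((D.map hj₁).1 y₁) = x₁ := by rw [c.compat, hy₁]
  have hy₂' : (c.incl j).1 ((D.map hj₂).1 y₂) = x₂ := by rw [c.compat, hy₂]
  obtain ⟨k, hik, hjk⟩ := hdir i j
  rw [projFun_eq @htrans hdir D c hjk hik ((D.map hj₁).1 y₁ + (D.map hj₂).1 y₂)
      (by rw [(c.incl j).2.map_add, hy₁', hy₂']),
    projFun_eq @htrans hdir D c hjk hik ((D.map hj₁).1 y₁) hy₁',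
    projFun_eq @htrans hdir D c hjk hik ((D.map hj₂).1 y₂) hy₂',
    (D.map hjk).2.map_add, (D.split hik).2.map_add]

theorem projFun_smul
    (htrans : ∀ {i j k}, rel i j → rel j k → rel i k)
    (hdir : ∀ i j, ∃ k, rel i k ∧ rel j k)
    (D : SplitSystem.{u, u} R ι rel) (c : LimitCocone R D P) (i : ι) (r : R) (x : P) :
    projFun @htrans hdir D c i (r • x) = r • projFun @htrans hdir D c i x := by
  obtain ⟨j, y, hy⟩ := c.exhaustive x
  obtain ⟨k, hik, hjk⟩ := hdir i j
  rw [projFun_eq @htrans hdir D c hjk hik (r • y) (by rw [(c.incl j).2.map_smul, hy]),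
    projFun_eq @htrans hdir D c hjk hik y hy,
    (D.map hjk).2.map_smul, (D.split hik).2.map_smul]

end mainaux2


section mainaux3

variable (R : Type u) [NonUnitalRing R] [HasLocalUnits R]

instance piLMod (n : ℕ) : LMod R (Fin n → R) where
  smul r c := fun k => r * c k
  smul_add' r c d := funext fun k => mul_add r (c k) (d k)
  add_smul' r s c := funext fun k => add_mul r s (c k)
  mul_smul' r s c := funext fun k => mul_assoc r s (c k)

theorem pi_smul_apply (n : ℕ) (r : R) (c : Fin n → R) (k : Fin n) :
    (r • c) k = r * c k := rfl

theorem piUnitary (n : ℕ) : IsUnitary R (Fin n → R) := by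
  classical
  intro c
  obtain ⟨e, he, h⟩ := HasLocalUnits.exists_unit (Finset.image c Finset.univ)
  have hc : c = e • c := by
    funext k
    exact ((h (c k) (Finset.mem_image_of_mem c (Finset.mem_univ k))).1).symm
  exact AddSubgroup.subset_closure ⟨e, c, hc⟩

/-- The finite free unitary module `R^n`. -/
def freeUMod (n : ℕ) : UMod.{u, u} R := ⟨Fin n → R, piUnitary R n⟩

theorem epi_of_surjective {M N : UMod.{u, u} R} (f : M ⟶ N)
    (hf : Function.Surjective f.1) : CategoryTheory.Epi f :=
  ⟨fun g h H => LinMap.ext (funext fun y => by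
    obtain ⟨x, rfl⟩ := hf y
    exact congrFun (congrArg Subtype.val H) x)⟩

/-- Dual basis lemma for finitely generated projective unitary modules. -/
theorem dualBasis_of_fg_projective (Q : UMod.{u, u} R) (hQfg : IsFG R Q.carrier)
    (hproj : CategoryTheory.Projective Q) :
    ∃ (n : ℕ) (b : Fin n → Q.carrier) (β : Fin n → LinMap R Q.carrier R),
      ∀ x : Q.carrier, x = ∑ l, (β l).1 x • b l := by
  classical
  obtain ⟨t, ht⟩ := hQfg
  set l : List Q.carrier := t.toList with hl
  set n : ℕ := l.length
  set b : Fin n → Q.carrier := l.get with hb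
  set qf : (Fin n → R) → Q.carrier := fun c => ∑ k, c k • b k with hqf
  have qlin : IsLHom R qf := by
    constructor
    · intro c d
      rw [hqf, ← Finset.sum_add_distrib]
      exact Finset.sum_congr rfl fun k _ => LMod.add_smul' (c k) (d k) (b k)
    · intro r c
      rw [hqf, LMod.smul_sum]
      refine Finset.sum_congr rfl fun k _ => ?_
      show ((r • c) k) • b k = r • (c k • b k)
      rw [pi_smul_apply]
      exact LMod.mul_smul' r (c k) (b k)
  have hbase : ∀ x ∈ t, ∀ r : R, ∃ c, qf c = r • x := by
    intro x hx r
    obtain ⟨k, hk⟩ := List.mem_iff_get.mp (Finset.mem_toList.mpr hx)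
    refine ⟨fun k' => if k' = k then r else 0, ?_⟩
    have h0 : ∀ k' : Fin n, (if k' = k then r else 0) • b k' =
        if k' = k then r • b k' else 0 := by
      intro k'
      by_cases hkk : k' = k
      · simp [hkk]
      · simp [hkk, LMod.zero_smul']
    have h1 : (∑ k' : Fin n, (if k' = k then r else 0) • b k') = r • x := by
      rw [Finset.sum_congr rfl fun k' _ => h0 k', Finset.sum_ite_eq' Finset.univ k
        (fun k' => r • b k')]
      simp only [Finset.mem_univ, if_true]
      rw [hb, hk]
    rw [hqf]
    exact h1
  have hrange : ∀ m : Q.carrier, ∀ r : R, ∃ c, qf c = r • m := by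
    intro m
    have hm := ht m
    induction hm using AddSubgroup.closure_induction with
    | mem x hx =>
        rcases hx with hx | ⟨r', x', hx', rfl⟩
        · exact hbase x hx
        · intro r
          obtain ⟨c, hc⟩ := hbase x' hx' (r * r')
          exact ⟨c, by rw [hc, LMod.mul_smul']⟩
    | zero =>
        intro r
        refine ⟨0, ?_⟩
        rw [LMod.smul_zero', hqf]
        refine Finset.sum_eq_zero fun k _ => ?_
        show (0 : R) • b k = 0
        exact LMod.zero_smul' (b k)
    | add x y hx hy ihx ihy =>
        intro r
        obtain ⟨cx, hcx⟩ := ihx r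
        obtain ⟨cy, hcy⟩ := ihy r
        exact ⟨cx + cy, by rw [qlin.map_add, hcx, hcy, LMod.smul_add']⟩
    | neg x hx ihx =>
        intro r
        obtain ⟨c, hc⟩ := ihx r
        exact ⟨-c, by rw [qlin.map_neg, hc, LMod.smul_neg']⟩
  have hsur : Function.Surjective qf := by
    intro m
    have hm := Q.unitary m
    induction hm using AddSubgroup.closure_induction with
    | mem x hx =>
        obtain ⟨r, m', rfl⟩ := hx
        exact hrange m' r
    | zero =>
        refine ⟨0, ?_⟩
        rw [hqf]
        exact Finset.sum_eq_zero fun k _ => LMod.zero_smul' (b k)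
    | add x y hx hy ihx ihy =>
        obtain ⟨cx, hcx⟩ := ihx
        obtain ⟨cy, hcy⟩ := ihy
        exact ⟨cx + cy, by rw [qlin.map_add, hcx, hcy]⟩
    | neg x hx ihx =>
        obtain ⟨c, hc⟩ := ihx
        exact ⟨-c, by rw [qlin.map_neg, hc]⟩
  let q : (freeUMod R n) ⟶ Q := ⟨qf, qlin⟩
  haveI : CategoryTheory.Epi q := epi_of_surjective R q hsur
  haveI := hproj
  let σ : Q ⟶ freeUMod R n := CategoryTheory.Projective.factorThru (𝟙 Q) q
  have hσ : σ ≫ q = 𝟙 Q := CategoryTheory.Projective.factorThru_comp _ _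
  refine ⟨n, b, fun k => ⟨fun x => σ.1 x k, ?_, ?_⟩, ?_⟩
  · intro x y
    rw [σ.2.map_add]
    rfl
  · intro r x
    rw [σ.2.map_smul]
    rfl
  · intro x
    have := congrFun (congrArg Subtype.val hσ) x
    exact this.symm

end mainaux3


section mainaux2b

variable {R : Type u} [NonUnitalRing R] {P : Type u} [AddCommGroup P] [LMod R P]
variable {ι : Type u} {rel : ι → ι → Prop}

theorem exists_incl_range_finset
    (hdir : ∀ i j, ∃ k, rel i k ∧ rel j k) (hne : Nonempty ι)
    (D : SplitSystem.{u, u} R ι rel) (c : LimitCocone R D P) (t : Finset P) :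
    ∃ i, ∀ w ∈ t, ∃ y, (c.incl i).1 y = w := by
  classical
  induction t using Finset.induction with
  | empty => exact ⟨hne.some, by simp⟩
  | @insert a t ha ih =>
      obtain ⟨i₀, hi₀⟩ := ih
      obtain ⟨j, y, hy⟩ := c.exhaustive a
      obtain ⟨k, hik, hjk⟩ := hdir i₀ j
      refine ⟨k, fun w hw => ?_⟩
      rcases Finset.mem_insert.mp hw with hw | hw
      · subst hw
        exact ⟨(D.map hjk).1 y, by rw [c.compat, hy]⟩
      · obtain ⟨yw, hyw⟩ := hi₀ w hw
        exact ⟨(D.map hik).1 yw, by rw [c.compat, hyw]⟩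

end mainaux2b

section mainaux4

open MulOpposite

variable {R : Type u} [NonUnitalRing R] {P : Type u} [AddCommGroup P] [LMod R P]
variable (S : NonUnitalSubring (LinMap R P P))
variable [LMod (↥S)ᵐᵒᵖ P] [SMulCommClass R (↥S)ᵐᵒᵖ P]

/-- The rank-one endomorphism `p ↦ (p)γ·y`. -/
def sigmaE (γ : LinMap R P R) (y : P) : LinMap R P P :=
  ⟨fun p => γ.1 p • y,
   ⟨fun p q => by rw [γ.2.map_add, LMod.add_smul'],
    fun r p => by
      rw [γ.2.map_smul, NonUnitalRing.smul_def]
      exact LMod.mul_smul' r (γ.1 p) y⟩⟩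

theorem sigmaE_add (γ : LinMap R P R) (y y' : P) :
    sigmaE γ (y + y') = sigmaE γ y + sigmaE γ y' :=
  LinMap.ext (funext fun p => LMod.smul_add' _ _ _)

theorem sigmaE_zero (γ : LinMap R P R) : sigmaE γ (0 : P) = 0 :=
  LinMap.ext (funext fun p => LMod.smul_zero' _)

variable {S} in
theorem mul_mem_S
    (hSEnd : ((AddSubgroup.closure
        {h : LinMap R P P | ∃ s ∈ S, ∃ g : LinMap R P P, h = s * g} :
        AddSubgroup (LinMap R P P)) : Set (LinMap R P P)) = ↑S)
    (s : ↥S) (g : LinMap R P P) : (s : LinMap R P P) * g ∈ S := by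
  have h2 : (s : LinMap R P P) * g ∈ ((AddSubgroup.closure
      {h : LinMap R P P | ∃ s' ∈ S, ∃ g' : LinMap R P P, h = s' * g'} :
      AddSubgroup (LinMap R P P)) : Set (LinMap R P P)) :=
    AddSubgroup.subset_closure ⟨s, s.2, g, rfl⟩
  rw [hSEnd] at h2
  exact h2

variable {S}

/-- `τ = s·σ_{γ,y} ∈ S`. -/
def tauS
    (hSEnd : ((AddSubgroup.closure
        {h : LinMap R P P | ∃ s ∈ S, ∃ g : LinMap R P P, h = s * g} :
        AddSubgroup (LinMap R P P)) : Set (LinMap R P P)) = ↑S)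
    (s : ↥S) (γ : LinMap R P R) (y : P) : ↥S :=
  ⟨(s : LinMap R P P) * sigmaE γ y, mul_mem_S hSEnd s _⟩

theorem tauS_apply (hSEnd : _) (hact : ∀ (s : ↥S) (x : P),
      (MulOpposite.op s) • x = (s : LinMap R P P).1 x)
    (s : ↥S) (γ : LinMap R P R) (y : P) (p : P) :
    op (tauS hSEnd s γ y) • p = γ.1 (op s • p) • y := by
  rw [hact, hact]
  rfl

theorem tauS_add (hSEnd : _) (s : ↥S) (γ : LinMap R P R) (y y' : P) :
    tauS hSEnd s γ (y + y') = tauS hSEnd s γ y + tauS hSEnd s γ y' := by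
  apply Subtype.ext
  show (s : LinMap R P P) * sigmaE γ (y + y') = _
  rw [sigmaE_add, left_distrib]
  rfl

theorem tauS_zero (hSEnd : _) (s : ↥S) (γ : LinMap R P R) :
    tauS hSEnd s γ (0 : P) = 0 := by
  apply Subtype.ext
  show (s : LinMap R P P) * sigmaE γ (0 : P) = _
  rw [sigmaE_zero, mul_zero]
  rfl

theorem tauS_opsmul (hSEnd : _) (hact : ∀ (s : ↥S) (x : P),
      (MulOpposite.op s) • x = (s : LinMap R P P).1 x)
    (s s' : ↥S) (γ : LinMap R P R) (y : P) :
    tauS hSEnd s γ (op s' • y) = tauS hSEnd s γ y * s' := by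
  apply Subtype.ext
  show (s : LinMap R P P) * sigmaE γ (op s' • y) =
    ((s : LinMap R P P) * sigmaE γ y) * (s' : LinMap R P P)
  rw [mul_assoc]
  congr 1
  apply LinMap.ext
  funext p
  show γ.1 p • (op s' • y) = (s' : LinMap R P P).1 (γ.1 p • y)
  rw [(s' : LinMap R P P).2.map_smul, ← hact s' y]

/-- Fixing by idempotents propagates along right multiplication. -/
theorem op_smul_fix (s e : ↥S) (hse : s * e = s) (p : P) :
    op e • (op s • p) = op s • p := by
  rw [← LMod.mul_smul']
  have : (op e * op s : (↥S)ᵐᵒᵖ) = op s := by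
    rw [← op_mul, hse]
  rw [this]

/-- The maps `λ_{γ,s,m} : p ↦ (p·s)γ • m`, as elements of `SHom R S P M`. -/
def lambdaS (γ : LinMap R P R) (s : ↥S) {M : Type u} [AddCommGroup M] [LMod R M]
    (m : M) : SHom R ↥S P M :=
  ⟨s • gammaInner m γ, smul_mem_umax s _⟩

theorem lambdaS_apply (γ : LinMap R P R) (s : ↥S) {M : Type u} [AddCommGroup M]
    [LMod R M] (m : M) (p : P) :
    (lambdaS γ s m).1.1 p = γ.1 (op s • p) • m := rfl

theorem lambdaS_add (γ : LinMap R P R) (s : ↥S) {M : Type u} [AddCommGroup M]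
    [LMod R M] (m m' : M) :
    lambdaS γ s (m + m') = lambdaS γ s m + lambdaS γ s m' :=
  Subtype.ext (LinMap.ext (funext fun p => LMod.smul_add' _ _ _))

theorem lambdaS_zero (γ : LinMap R P R) (s : ↥S) {M : Type u} [AddCommGroup M]
    [LMod R M] : lambdaS γ s (0 : M) = 0 :=
  Subtype.ext (LinMap.ext (funext fun p => LMod.smul_zero' _))

theorem lambdaS_neg (γ : LinMap R P R) (s : ↥S) {M : Type u} [AddCommGroup M]
    [LMod R M] (m : M) : lambdaS γ s (-m) = -(lambdaS γ s m) :=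
  Subtype.ext (LinMap.ext (funext fun p => LMod.smul_neg' _ _))

theorem lambdaS_eq_tau_smul (hSEnd : _) (hact : ∀ (s : ↥S) (x : P),
      (MulOpposite.op s) • x = (s : LinMap R P P).1 x)
    (γ : LinMap R P R) (s : ↥S) {M : Type u} [AddCommGroup M] [LMod R M]
    (α : SHom R ↥S P M) (x : P) :
    lambdaS γ s (α.1.1 x) = (tauS hSEnd s γ x) • α := by
  apply Subtype.ext
  apply LinMap.ext
  funext p
  show γ.1 (op s • p) • α.1.1 x = α.1.1 (op (tauS hSEnd s γ x) • p)
  rw [tauS_apply hSEnd hact, α.1.2.map_smul]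

/-- The "coordinate annihilator" subgroup `st'(M)`. -/
def stAnn (M : Type u) [AddCommGroup M] [LMod R M] : AddSubgroup M where
  carrier := {m | ∀ (γ : LinMap R P R) (s : ↥S) (p : P), γ.1 (op s • p) • m = 0}
  zero_mem' := fun γ s p => LMod.smul_zero' _
  add_mem' := fun ha hb γ s p => by rw [LMod.smul_add', ha γ s p, hb γ s p, add_zero]
  neg_mem' := fun ha γ s p => by rw [LMod.smul_neg', ha γ s p, neg_zero]

variable (S) in
theorem stAnn_stable (M : Type u) [AddCommGroup M] [LMod R M] (r : R) {m : M}
    (hm : m ∈ (stAnn (S := S) M : AddSubgroup M)) :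
    r • m ∈ (stAnn (S := S) M : AddSubgroup M) := by
  intro γ s p
  have hγr : IsLHom R (fun q : P => γ.1 q * r) :=
    ⟨fun a b => by rw [γ.2.map_add, add_mul],
     fun r' q => by
       rw [γ.2.map_smul, NonUnitalRing.smul_def, NonUnitalRing.smul_def, mul_assoc]⟩
  have h := hm ⟨fun q => γ.1 q * r, hγr⟩ s p
  rw [← LMod.mul_smul']
  exact h

end mainaux4

section mainquot

variable {R : Type u} [NonUnitalRing R]

/-- The scalar action on a quotient by a stable subgroup. -/
def quotSMulMap {M : Type v} [AddCommGroup M] [LMod R M] (A : AddSubgroup M)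
    (hA : ∀ (r : R) (m : M), m ∈ A → r • m ∈ A) (r : R) : M ⧸ A →+ M ⧸ A :=
  QuotientAddGroup.map A A ⟨⟨(r • ·), LMod.smul_zero' r⟩, LMod.smul_add' r⟩
    (fun m hm => hA r m hm)

theorem quotSMulMap_mk {M : Type v} [AddCommGroup M] [LMod R M] (A : AddSubgroup M)
    (hA : ∀ (r : R) (m : M), m ∈ A → r • m ∈ A) (r : R) (m : M) :
    quotSMulMap A hA r ((m : M ⧸ A)) = ((r • m : M) : M ⧸ A) :=
  QuotientAddGroup.map_mk _ _ _ _ _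

/-- Quotient of a module by a stable subgroup. -/
def quotLMod {M : Type v} [AddCommGroup M] [LMod R M] (A : AddSubgroup M)
    (hA : ∀ (r : R) (m : M), m ∈ A → r • m ∈ A) : LMod R (M ⧸ A) where
  smul r x := quotSMulMap A hA r x
  smul_add' r x y := map_add (quotSMulMap A hA r) x y
  add_smul' r s x := by
    refine QuotientAddGroup.induction_on x fun m => ?_
    show quotSMulMap A hA (r + s) _ = quotSMulMap A hA r _ + quotSMulMap A hA s _
    rw [quotSMulMap_mk, quotSMulMap_mk, quotSMulMap_mk, LMod.add_smul']
    rfl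
  mul_smul' r s x := by
    refine QuotientAddGroup.induction_on x fun m => ?_
    show quotSMulMap A hA (r * s) _ = quotSMulMap A hA r (quotSMulMap A hA s _)
    rw [quotSMulMap_mk, quotSMulMap_mk, quotSMulMap_mk, LMod.mul_smul']

theorem quotLMod_smul_mk {M : Type v} [AddCommGroup M] [LMod R M] (A : AddSubgroup M)
    (hA : ∀ (r : R) (m : M), m ∈ A → r • m ∈ A) (r : R) (m : M) :
    (quotLMod A hA).smul r ((m : M ⧸ A)) = ((r • m : M) : M ⧸ A) :=
  QuotientAddGroup.map_mk _ _ _ _ _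

/-- Quotients of unitary modules are unitary (for any compatible module structure). -/
theorem isUnitary_quot {M : Type v} [AddCommGroup M] [LMod R M] (A : AddSubgroup M)
    [inst : LMod R (M ⧸ A)]
    (hsm : ∀ (r : R) (m : M), r • ((m : M ⧸ A)) = ((r • m : M) : M ⧸ A))
    (hu : IsUnitary R M) : IsUnitary R (M ⧸ A) := by
  intro x
  refine QuotientAddGroup.induction_on x fun m => ?_
  have hm := hu m
  induction hm using AddSubgroup.closure_induction with
  | mem y hy =>
      obtain ⟨r, n, rfl⟩ := hy
      exact AddSubgroup.subset_closure ⟨r, ((n : M ⧸ A)), (hsm r n).symm⟩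
  | zero => exact AddSubgroup.zero_mem _
  | add y z hy hz ihy ihz =>
      have : ((y + z : M) : M ⧸ A) = ((y : M ⧸ A)) + ((z : M ⧸ A)) := rfl
      rw [this]
      exact AddSubgroup.add_mem _ ihy ihz
  | neg y hy ihy =>
      have : ((-y : M) : M ⧸ A) = -((y : M ⧸ A)) := rfl
      rw [this]
      exact AddSubgroup.neg_mem _ ihy

end mainquot


section maindb

open MulOpposite

variable {R : Type u} [NonUnitalRing R] [HasLocalUnits R]
variable {P : Type u} [AddCommGroup P] [LMod R P]
variable {S : NonUnitalSubring (LinMap R P P)}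
variable [LMod (↥S)ᵐᵒᵖ P] [SMulCommClass R (↥S)ᵐᵒᵖ P]

/-- Dual basis for `Pe`, with basis vectors inside `Pe`. -/
theorem exists_dual_basis_pe
    (hlp : IsLocallyProjective R P)
    (hact : ∀ (s : ↥S) (x : P), (MulOpposite.op s) • x = (s : LinMap R P P).1 x)
    (hfg : ∀ f : LinMap R P P, f ∈ S → f * f = f → IsFGSet R (Set.range f.1))
    (e : ↥S) (he : e * e = e) :
    ∃ (k : ℕ) (γ : Fin k → LinMap R P R) (z : Fin k → P),
      (∀ l, op e • z l = z l) ∧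
      ∀ x : P, op e • x = x → x = ∑ l, (γ l).1 x • z l := by
  classical
  have he' : (e : LinMap R P P) * (e : LinMap R P P) = (e : LinMap R P P) := by
    rw [← MulMemClass.coe_mul, he]
  obtain ⟨t, htsub, htspan⟩ := hfg (e : LinMap R P P) e.2 he'
  obtain ⟨ι, rel, hrefl, htrans, hne, hdir, D, c, hP⟩ := hlp
  obtain ⟨i, hi⟩ := exists_incl_range_finset hdir hne D c t
  obtain ⟨nQ, b, β, hdb⟩ := dualBasis_of_fg_projective R (D.obj i) (hP i).1 (hP i).2
  set π : P → (D.obj i).carrier := projFun @htrans hdir D c i with hπ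
  set γ₀ : Fin nQ → LinMap R P R := fun l =>
    ⟨fun x => (β l).1 (π x),
     ⟨fun x y => by rw [hπ, projFun_add @htrans hdir D c, (β l).2.map_add],
      fun r x => by rw [hπ, projFun_smul @htrans hdir D c, (β l).2.map_smul]⟩⟩ with hγ₀
  set z₀ : Fin nQ → P := fun l => (c.incl i).1 (b l) with hz₀
  have hpred : ∀ x ∈ lspan R (↑t : Set P), x = ∑ l, (γ₀ l).1 x • z₀ l := by
    intro x hx
    have hbase : ∀ x ∈ t, x = ∑ l, (γ₀ l).1 x • z₀ l := by
      intro x hxt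
      obtain ⟨y, hy⟩ := hi x hxt
      have hπx : π x = y := by rw [hπ, ← hy, projFun_incl @htrans hdir D c]
      calc x = (c.incl i).1 y := hy.symm
        _ = (c.incl i).1 (∑ l, (β l).1 y • b l) := by rw [← hdb y]
        _ = ∑ l, (β l).1 y • (c.incl i).1 (b l) := by
            rw [(c.incl i).2.map_sum]
            exact Finset.sum_congr rfl fun l _ => (c.incl i).2.map_smul _ _
        _ = ∑ l, (γ₀ l).1 x • z₀ l := by
            refine Finset.sum_congr rfl fun l _ => ?_
            rw [hγ₀, hz₀]
            show (β l).1 y • _ = (β l).1 (π x) • _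
            rw [hπx]
    induction hx using AddSubgroup.closure_induction with
    | mem x hx =>
        rcases hx with hx | ⟨r, x', hx', rfl⟩
        · exact hbase x hx
        · have h1 := hbase x' hx'
          calc r • x' = r • ∑ l, (γ₀ l).1 x' • z₀ l := by rw [← h1]
            _ = ∑ l, r • ((γ₀ l).1 x' • z₀ l) := LMod.smul_sum r _ _
            _ = ∑ l, (γ₀ l).1 (r • x') • z₀ l := by
                refine Finset.sum_congr rfl fun l _ => ?_
                rw [(γ₀ l).2.map_smul, NonUnitalRing.smul_def, LMod.mul_smul']
    | zero =>
        symm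
        refine Finset.sum_eq_zero fun l _ => ?_
        rw [(γ₀ l).2.map_zero]
        exact LMod.zero_smul' _
    | add x y hx hy ihx ihy =>
        rw [Finset.sum_congr rfl fun l (_ : l ∈ Finset.univ) =>
          (by rw [(γ₀ l).2.map_add, LMod.add_smul'] :
            (γ₀ l).1 (x + y) • z₀ l = (γ₀ l).1 x • z₀ l + (γ₀ l).1 y • z₀ l),
          Finset.sum_add_distrib, ← ihx, ← ihy]
    | neg x hx ihx =>
        rw [Finset.sum_congr rfl fun l (_ : l ∈ Finset.univ) =>
          (by rw [(γ₀ l).2.map_neg, LMod.neg_smul'] :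
            (γ₀ l).1 (-x) • z₀ l = -((γ₀ l).1 x • z₀ l))]
        rw [Finset.sum_neg_distrib, ← ihx]
  refine ⟨nQ, γ₀, fun l => op e • z₀ l, ?_, ?_⟩
  · intro l
    rw [← LMod.mul_smul', ← op_mul, he]
  · intro x hxe
    have hxPe : x ∈ lspan R (↑t : Set P) := by
      apply htspan
      exact ⟨x, by rw [← hact, hxe]⟩
    have h1 := hpred x hxPe
    calc x = op e • x := hxe.symm
      _ = op e • ∑ l, (γ₀ l).1 x • z₀ l := by rw [← h1]
      _ = ∑ l, op e • ((γ₀ l).1 x • z₀ l) := LMod.smul_sum _ _ _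
      _ = ∑ l, (γ₀ l).1 x • (op e • z₀ l) := by
          refine Finset.sum_congr rfl fun l _ => ?_
          exact (smul_comm ((γ₀ l).1 x) (op e) (z₀ l)).symm

end maindb


section mainff

open MulOpposite CategoryTheory

variable {R : Type u} [NonUnitalRing R] [HasLocalUnits R]
variable {P : Type u} [AddCommGroup P] [LMod R P]
variable {S : NonUnitalSubring (LinMap R P P)} [HasLocalUnits ↥S]
variable [LMod (↥S)ᵐᵒᵖ P] [SMulCommClass R (↥S)ᵐᵒᵖ P]

/-- Coordinate-annihilated elements vanish in modules with `st_P = 0`. -/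
theorem coordAnn_eq_zero
    (hlp : IsLocallyProjective R P)
    (hact : ∀ (s : ↥S) (x : P), (MulOpposite.op s) • x = (s : LinMap R P P).1 x)
    (hfg : ∀ f : LinMap R P P, f ∈ S → f * f = f → IsFGSet R (Set.range f.1))
    {M : Type u} [AddCommGroup M] [LMod R M]
    (hst : stPZero R ↥S P M)
    (m : M) (hm : ∀ (γ : LinMap R P R) (s : ↥S) (p : P), γ.1 (op s • p) • m = 0) :
    m = 0 := by
  refine hst (stAnn (S := S) M) (fun r x hx => stAnn_stable S M r hx) ?_ m hm
  intro s f hf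
  obtain ⟨e, he, hee⟩ := exists_idem_unit_list (C := ↥S) [s]
  have hse : s * e = s := (hee s (by simp)).2
  obtain ⟨k, γ, z, hz, hdbp⟩ := exists_dual_basis_pe hlp hact hfg e he
  apply LinMap.ext
  funext x
  show f.1 (op s • x) = 0
  have h1 : op s • x = ∑ l, (γ l).1 (op s • x) • z l := hdbp _ (op_smul_fix s e hse x)
  rw [h1, f.2.map_sum]
  refine Finset.sum_eq_zero fun l _ => ?_
  rw [f.2.map_smul]
  exact hf (z l) (γ l) s x

theorem main_faithful
    (pred : UMod.{u, u} R → Prop)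
    (hpred : ∀ M, pred M → ∀ m : M.carrier, m ∈ sTrSub R ↥S P M.carrier) :
    (CategoryTheory.ObjectProperty.ι pred ⋙ sHomF R ↥S P).Faithful := by
  constructor
  intro Mo No f g hfg'
  apply CategoryTheory.ObjectProperty.hom_ext
  apply LinMap.ext
  funext m
  have hm := hpred Mo.obj Mo.property m
  induction hm using AddSubgroup.closure_induction with
  | mem x hx =>
      obtain ⟨t, ht, y, rfl⟩ := hx
      have h1 := congrFun (congrArg Subtype.val hfg') (⟨t, ht⟩ : SHom R ↥S P Mo.obj.carrier)
      have h2 := congrFun (congrArg (fun q => Subtype.val q) (congrArg Subtype.val h1)) y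
      exact h2
  | zero => rw [f.hom.2.map_zero, g.hom.2.map_zero]
  | add x y hx hy ihx ihy => rw [f.hom.2.map_add, g.hom.2.map_add, ihx, ihy]
  | neg x hx ihx => rw [f.hom.2.map_neg, g.hom.2.map_neg, ihx]

theorem main_full
    (hlp : IsLocallyProjective R P)
    (hact : ∀ (s : ↥S) (x : P), (MulOpposite.op s) • x = (s : LinMap R P P).1 x)
    (hSEnd : ((AddSubgroup.closure
        {h : LinMap R P P | ∃ s ∈ S, ∃ g : LinMap R P P, h = s * g} :
        AddSubgroup (LinMap R P P)) : Set (LinMap R P P)) = ↑S)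
    (hfg : ∀ f : LinMap R P P, f ∈ S → f * f = f → IsFGSet R (Set.range f.1)) :
    (CategoryTheory.ObjectProperty.ι
        (fun M : UMod.{u, u} R => stPZero R ↥S P M.carrier ∧
          ∀ m : M.carrier, m ∈ sTrSub R ↥S P M.carrier) ⋙
      sHomF R ↥S P).Full := by
  constructor
  intro Mo No h
  set Graph : AddSubgroup (Mo.obj.carrier × No.obj.carrier) :=
    AddSubgroup.closure {q | ∃ (α : SHom R ↥S P Mo.obj.carrier) (x : P),
      q = (α.1.1 x, (h.1 α).1.1 x)} with hGraph
  have inv : ∀ q ∈ Graph, ∀ (γ : LinMap R P R) (s : ↥S) (p : P),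
      γ.1 (op s • p) • q.2 = (h.1 (lambdaS γ s q.1)).1.1 p := by
    intro q hq
    induction hq using AddSubgroup.closure_induction with
    | mem q hq =>
        obtain ⟨α, x, rfl⟩ := hq
        intro γ s p
        erw [lambdaS_eq_tau_smul hSEnd hact γ s α x, h.2.map_smul]
        show γ.1 (op s • p) • (h.1 α).1.1 x = ((tauS hSEnd s γ x) • (h.1 α)).1.1 p
        have hr : ((tauS hSEnd s γ x) • (h.1 α)).1.1 p =
            (h.1 α).1.1 (op (tauS hSEnd s γ x) • p) := rfl
        rw [hr, tauS_apply hSEnd hact, (h.1 α).1.2.map_smul]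
    | zero =>
        intro γ s p
        erw [show ((0 : Mo.obj.carrier × No.obj.carrier)).2 = 0 from rfl,
          LMod.smul_zero', show ((0 : Mo.obj.carrier × No.obj.carrier)).1 = 0 from rfl,
          lambdaS_zero, h.2.map_zero]
        rfl
    | add a b ha hb iha ihb =>
        intro γ s p
        erw [show ((a + b).2) = a.2 + b.2 from rfl, LMod.smul_add', iha γ s p, ihb γ s p,
          show ((a + b).1) = a.1 + b.1 from rfl, lambdaS_add, h.2.map_add]
        rfl
    | neg a ha iha =>
        intro γ s p
        erw [show ((-a).2) = -a.2 from rfl, LMod.smul_neg', iha γ s p,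
          show ((-a).1) = -a.1 from rfl, lambdaS_neg, h.2.map_neg]
        rfl
  have funct : ∀ d : No.obj.carrier, ((0 : Mo.obj.carrier), d) ∈ Graph → d = 0 := by
    intro d hd
    refine coordAnn_eq_zero hlp hact hfg No.property.1 d ?_
    intro γ s p
    have h2 := inv _ hd γ s p
    erw [lambdaS_zero, h.2.map_zero] at h2
    exact h2
  have funct2 : ∀ (m : Mo.obj.carrier) (d₁ d₂ : No.obj.carrier),
      (m, d₁) ∈ Graph → (m, d₂) ∈ Graph → d₁ = d₂ := by
    intro m d₁ d₂ h₁ h₂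
    have h3 := AddSubgroup.sub_mem Graph h₁ h₂
    have heq : ((m, d₁) - (m, d₂) : Mo.obj.carrier × No.obj.carrier) =
        (0, d₁ - d₂) := by
      rw [Prod.mk_sub_mk, sub_self]
    rw [heq] at h3
    exact sub_eq_zero.mp (funct _ h3)
  have ex : ∀ m : Mo.obj.carrier, ∃ d, (m, d) ∈ Graph := by
    intro m
    have hm := Mo.property.2 m
    induction hm using AddSubgroup.closure_induction with
    | mem x hx =>
        obtain ⟨t, ht, y, rfl⟩ := hx
        exact ⟨(h.1 ⟨t, ht⟩).1.1 y, AddSubgroup.subset_closure ⟨⟨t, ht⟩, y, rfl⟩⟩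
    | zero => exact ⟨0, AddSubgroup.zero_mem _⟩
    | add x y hx hy ihx ihy =>
        obtain ⟨dx, hdx⟩ := ihx
        obtain ⟨dy, hdy⟩ := ihy
        exact ⟨dx + dy, AddSubgroup.add_mem _ hdx hdy⟩
    | neg x hx ihx =>
        obtain ⟨dx, hdx⟩ := ihx
        exact ⟨-dx, AddSubgroup.neg_mem _ hdx⟩
  have stab : ∀ (r : R), ∀ q ∈ Graph, ((r • q.1, r • q.2) :
      Mo.obj.carrier × No.obj.carrier) ∈ Graph := by
    intro r q hq
    induction hq using AddSubgroup.closure_induction with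
    | mem q hq =>
        obtain ⟨α, x, rfl⟩ := hq
        refine AddSubgroup.subset_closure ⟨α, r • x, ?_⟩
        show (r • α.1.1 x, r • (h.1 α).1.1 x) = _
        rw [← α.1.2.map_smul, ← (h.1 α).1.2.map_smul]
    | zero =>
        rw [show ((0 : Mo.obj.carrier × No.obj.carrier)).1 = 0 from rfl,
          show ((0 : Mo.obj.carrier × No.obj.carrier)).2 = 0 from rfl,
          LMod.smul_zero', LMod.smul_zero']
        exact AddSubgroup.zero_mem _
    | add a b ha hb iha ihb =>
        rw [show ((a + b).1) = a.1 + b.1 from rfl, show ((a + b).2) = a.2 + b.2 from rfl,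
          LMod.smul_add', LMod.smul_add']
        exact AddSubgroup.add_mem _ iha ihb
    | neg a ha iha =>
        rw [show ((-a).1) = -a.1 from rfl, show ((-a).2) = -a.2 from rfl,
          LMod.smul_neg', LMod.smul_neg']
        exact AddSubgroup.neg_mem _ iha
  choose fd hfd using ex
  refine ⟨⟨fd, ?_, ?_⟩, ?_⟩
  · intro x y
    exact funct2 _ _ _ (hfd (x + y)) (AddSubgroup.add_mem _ (hfd x) (hfd y))
  · intro r x
    exact funct2 _ _ _ (hfd (r • x)) (stab r _ (hfd x))
  · apply LinMap.ext
    funext α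
    apply Subtype.ext
    apply LinMap.ext
    funext p
    exact funct2 _ _ _ (hfd (α.1.1 p)) (AddSubgroup.subset_closure ⟨α, p, rfl⟩)

end mainff


section maintensor

open MulOpposite
open scoped TensorProduct

variable {R : Type u} [NonUnitalRing R]
variable (P : Type u) [AddCommGroup P] [LMod R P]
variable (N : Type u) [AddCommGroup N]

/-- The `R`-action on `P ⊗ℤ N` through the first factor. -/
noncomputable def tensorSmulFun (r : R) : P ⊗[ℤ] N →+ P ⊗[ℤ] N :=
  (TensorProduct.map (AddMonoidHom.toIntLinearMap
    ⟨⟨(r • ·), LMod.smul_zero' r⟩, LMod.smul_add' r⟩) LinearMap.id).toAddMonoidHom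

theorem tensorSmulFun_tmul (r : R) (x : P) (n : N) :
    tensorSmulFun P N r (x ⊗ₜ[ℤ] n) = (r • x) ⊗ₜ[ℤ] n := by
  simp [tensorSmulFun]

noncomputable instance tensorLMod : LMod R (P ⊗[ℤ] N) where
  smul r t := tensorSmulFun P N r t
  smul_add' r x y := map_add (tensorSmulFun P N r) x y
  add_smul' r s t := by
    show tensorSmulFun P N (r + s) t = tensorSmulFun P N r t + tensorSmulFun P N s t
    induction t using TensorProduct.induction_on with
    | zero => rw [map_zero, map_zero, map_zero, add_zero]
    | tmul x n =>
        rw [tensorSmulFun_tmul, tensorSmulFun_tmul, tensorSmulFun_tmul,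
          LMod.add_smul', TensorProduct.add_tmul]
    | add a b iha ihb =>
        rw [map_add, map_add, map_add, iha, ihb]
        abel
  mul_smul' r s t := by
    show tensorSmulFun P N (r * s) t = tensorSmulFun P N r (tensorSmulFun P N s t)
    induction t using TensorProduct.induction_on with
    | zero => rw [map_zero, map_zero, map_zero]
    | tmul x n =>
        rw [tensorSmulFun_tmul, tensorSmulFun_tmul, tensorSmulFun_tmul, LMod.mul_smul']
    | add a b iha ihb => rw [map_add, map_add, map_add, iha, ihb]

theorem tensorLMod_smul_tmul (r : R) (x : P) (n : N) :
    (r • (x ⊗ₜ[ℤ] n) : P ⊗[ℤ] N) = (r • x) ⊗ₜ[ℤ] n :=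
  tensorSmulFun_tmul P N r x n

variable {P₁ : Type u} [AddCommGroup P₁] [LMod R P₁]
variable (S : NonUnitalSubring (LinMap R P₁ P₁))
variable [LMod (↥S)ᵐᵒᵖ P₁] [SMulCommClass R (↥S)ᵐᵒᵖ P₁]
variable (N₁ : Type u) [AddCommGroup N₁] [LMod (↥S) N₁]

/-- The balancing relations for the tensor product over `S`. -/
noncomputable def tensorRel : AddSubgroup (P₁ ⊗[ℤ] N₁) :=
  AddSubgroup.closure {w | ∃ (s : ↥S) (x : P₁) (n : N₁),
    w = ((op s • x) ⊗ₜ[ℤ] n) - (x ⊗ₜ[ℤ] (s • n))}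

theorem tensorRel_stable (r : R) {t : P₁ ⊗[ℤ] N₁} (ht : t ∈ tensorRel S N₁) :
    r • t ∈ tensorRel S N₁ := by
  show tensorSmulFun P₁ N₁ r t ∈ tensorRel S N₁
  induction ht using AddSubgroup.closure_induction with
  | mem w hw =>
      obtain ⟨s, x, n, rfl⟩ := hw
      rw [map_sub, tensorSmulFun_tmul, tensorSmulFun_tmul, smul_comm r (op s) x]
      exact AddSubgroup.subset_closure ⟨s, r • x, n, rfl⟩
  | zero => rw [map_zero]; exact AddSubgroup.zero_mem _
  | add a b ha hb iha ihb => rw [map_add]; exact AddSubgroup.add_mem _ iha ihb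
  | neg a ha iha => rw [map_neg]; exact AddSubgroup.neg_mem _ iha

/-- The tensor product `P ⊗_S N` of the bimodule `P` and a left `S`-module `N`. -/
abbrev TensorPN : Type u := (P₁ ⊗[ℤ] N₁) ⧸ tensorRel S N₁

noncomputable instance tensorPNLMod : LMod R (TensorPN S N₁) :=
  quotLMod (tensorRel S N₁) (fun r m hm => tensorRel_stable S N₁ r hm)

theorem tensorPN_smul_mk (r : R) (t : P₁ ⊗[ℤ] N₁) :
    (r • (QuotientAddGroup.mk t : TensorPN S N₁)) = QuotientAddGroup.mk (r • t) :=
  quotSMulMap_mk _ _ r t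

theorem tensor_balance (s : ↥S) (x : P₁) (n : N₁) :
    (QuotientAddGroup.mk ((op s • x) ⊗ₜ[ℤ] n) : TensorPN S N₁) =
      QuotientAddGroup.mk (x ⊗ₜ[ℤ] (s • n)) := by
  refine QuotientAddGroup.eq.mpr ?_
  rw [← sub_eq_neg_add, ← neg_sub]
  exact AddSubgroup.neg_mem _ (AddSubgroup.subset_closure ⟨s, x, n, rfl⟩)

/-- The maps `μ_n : P → P ⊗_S N`, `x ↦ [x ⊗ n]`. -/
noncomputable def muT (n : N₁) : LinMap R P₁ (TensorPN S N₁) :=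
  ⟨fun x => QuotientAddGroup.mk (x ⊗ₜ[ℤ] n),
   ⟨fun x y => by rw [TensorProduct.add_tmul]; rfl,
    fun r x => by rw [tensorPN_smul_mk, tensorLMod_smul_tmul]⟩⟩

theorem muT_add (n n' : N₁) : muT S N₁ (n + n') = muT S N₁ n + muT S N₁ n' :=
  LinMap.ext (funext fun x => by
    show QuotientAddGroup.mk (x ⊗ₜ[ℤ] (n + n')) = _
    rw [TensorProduct.tmul_add]
    rfl)

theorem muT_zero : muT S N₁ (0 : N₁) = 0 :=
  LinMap.ext (funext fun x => by
    show QuotientAddGroup.mk (x ⊗ₜ[ℤ] (0 : N₁)) = _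
    rw [TensorProduct.tmul_zero]
    rfl)

theorem muT_opsmul (s : ↥S) (n : N₁) :
    (s • muT S N₁ n : LinMap R P₁ (TensorPN S N₁)) = muT S N₁ (s • n) :=
  LinMap.ext (funext fun x => tensor_balance S N₁ s x n)

theorem muT_mem (hNu : IsUnitary (↥S) N₁) (n : N₁) :
    muT S N₁ n ∈ umax (↥S) (LinMap R P₁ (TensorPN S N₁)) := by
  have hn := hNu n
  induction hn using AddSubgroup.closure_induction with
  | mem x hx =>
      obtain ⟨s, n', rfl⟩ := hx
      rw [← muT_opsmul]
      exact smul_mem_umax s _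
  | zero => rw [muT_zero]; exact AddSubgroup.zero_mem _
  | add a b ha hb iha ihb => rw [muT_add]; exact AddSubgroup.add_mem _ iha ihb
  | neg a ha iha =>
      have : muT S N₁ (-a) = -(muT S N₁ a) := by
        have h2 := muT_add S N₁ a (-a)
        rw [add_neg_cancel, muT_zero] at h2
        exact eq_neg_of_add_eq_zero_right h2.symm
      rw [this]
      exact AddSubgroup.neg_mem _ iha

variable {S}

/-- The contraction maps `ξ_{s,γ} : P ⊗ℤ N → N`, `y ⊗ n ↦ (s·σ_{γ,y})·n`. -/
noncomputable def xiBil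
    (hSEnd : ((AddSubgroup.closure
        {h : LinMap R P₁ P₁ | ∃ s ∈ S, ∃ g : LinMap R P₁ P₁, h = s * g} :
        AddSubgroup (LinMap R P₁ P₁)) : Set (LinMap R P₁ P₁)) = ↑S)
    (s : ↥S) (γ : LinMap R P₁ R) : P₁ →+ N₁ →+ N₁ :=
  AddMonoidHom.mk' (fun y => AddMonoidHom.mk' (fun n => (tauS hSEnd s γ y) • n)
      (LMod.smul_add' _))
    (fun y y' => by
      apply AddMonoidHom.ext
      intro n
      show (tauS hSEnd s γ (y + y')) • n = _
      rw [tauS_add, LMod.add_smul']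
      rfl)

noncomputable def xiT
    (hSEnd : ((AddSubgroup.closure
        {h : LinMap R P₁ P₁ | ∃ s ∈ S, ∃ g : LinMap R P₁ P₁, h = s * g} :
        AddSubgroup (LinMap R P₁ P₁)) : Set (LinMap R P₁ P₁)) = ↑S)
    (s : ↥S) (γ : LinMap R P₁ R) : P₁ ⊗[ℤ] N₁ →+ N₁ :=
  TensorProduct.liftAddHom (xiBil N₁ hSEnd s γ) (by intro z y n; simp)

theorem xiT_tmul (hSEnd : _) (s : ↥S) (γ : LinMap R P₁ R) (y : P₁) (n : N₁) :
    xiT N₁ hSEnd s γ (y ⊗ₜ[ℤ] n) = (tauS hSEnd s γ y) • n :=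
  TensorProduct.liftAddHom_tmul _ _ y n

theorem xiT_rel (hSEnd : _)
    (hact : ∀ (s : ↥S) (x : P₁), (MulOpposite.op s) • x = (s : LinMap R P₁ P₁).1 x)
    (s : ↥S) (γ : LinMap R P₁ R) {t : P₁ ⊗[ℤ] N₁} (ht : t ∈ tensorRel S N₁) :
    xiT N₁ hSEnd s γ t = 0 := by
  induction ht using AddSubgroup.closure_induction with
  | mem w hw =>
      obtain ⟨s', x, n, rfl⟩ := hw
      rw [map_sub, xiT_tmul, xiT_tmul, tauS_opsmul hSEnd hact, LMod.mul_smul', sub_self]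
  | zero => exact map_zero _
  | add a b ha hb iha ihb => rw [map_add, iha, ihb, add_zero]
  | neg a ha iha => rw [map_neg, iha, neg_zero]

/-- `ξ` descends to `P ⊗_S N`. -/
noncomputable def xiQ
    (hSEnd : ((AddSubgroup.closure
        {h : LinMap R P₁ P₁ | ∃ s ∈ S, ∃ g : LinMap R P₁ P₁, h = s * g} :
        AddSubgroup (LinMap R P₁ P₁)) : Set (LinMap R P₁ P₁)) = ↑S)
    (hact : ∀ (s : ↥S) (x : P₁), (MulOpposite.op s) • x = (s : LinMap R P₁ P₁).1 x)
    (s : ↥S) (γ : LinMap R P₁ R) : TensorPN S N₁ →+ N₁ :=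
  QuotientAddGroup.lift _ (xiT N₁ hSEnd s γ) (fun t ht => xiT_rel N₁ hSEnd hact s γ ht)

theorem xiQ_mk (hSEnd : _) (hact : _) (s : ↥S) (γ : LinMap R P₁ R) (t : P₁ ⊗[ℤ] N₁) :
    xiQ N₁ hSEnd hact s γ (QuotientAddGroup.mk t) = xiT N₁ hSEnd s γ t := rfl

/-- The key identity `(p·s)γ • m = [p ⊗ ξ(m)]`. -/
theorem daggerT (hSEnd : _)
    (hact : ∀ (s : ↥S) (x : P₁), (MulOpposite.op s) • x = (s : LinMap R P₁ P₁).1 x)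
    (s : ↥S) (γ : LinMap R P₁ R) (m : TensorPN S N₁) (p : P₁) :
    γ.1 (op s • p) • m =
      QuotientAddGroup.mk (p ⊗ₜ[ℤ] (xiQ N₁ hSEnd hact s γ m)) := by
  refine QuotientAddGroup.induction_on m fun t => ?_
  induction t using TensorProduct.induction_on with
  | zero =>
      rw [show (QuotientAddGroup.mk (0 : P₁ ⊗[ℤ] N₁) : TensorPN S N₁) = 0 from rfl,
        LMod.smul_zero', map_zero, TensorProduct.tmul_zero]
      rfl
  | tmul x n =>
      rw [tensorPN_smul_mk, tensorLMod_smul_tmul, xiQ_mk, xiT_tmul,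
        ← tensor_balance S N₁ (tauS hSEnd s γ x) p n, tauS_apply hSEnd hact]
  | add a b iha ihb =>
      rw [show (QuotientAddGroup.mk (a + b) : TensorPN S N₁) =
            QuotientAddGroup.mk a + QuotientAddGroup.mk b from rfl,
        LMod.smul_add', iha, ihb,
        show xiQ N₁ hSEnd hact s γ (QuotientAddGroup.mk a + QuotientAddGroup.mk b) =
          xiQ N₁ hSEnd hact s γ (QuotientAddGroup.mk a) +
            xiQ N₁ hSEnd hact s γ (QuotientAddGroup.mk b) from map_add _ _ _,
        TensorProduct.tmul_add]
      rfl

end maintensor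


section mainess

open MulOpposite CategoryTheory
open scoped TensorProduct

variable {R : Type u} [NonUnitalRing R] [HasLocalUnits R]
variable {P : Type u} [AddCommGroup P] [LMod R P]
variable (S : NonUnitalSubring (LinMap R P P)) [HasLocalUnits ↥S]
variable [LMod (↥S)ᵐᵒᵖ P] [SMulCommClass R (↥S)ᵐᵒᵖ P]
variable (N : Type u) [AddCommGroup N] [LMod (↥S) N]

/-- `(P ⊗_S N) / st'`. -/
abbrev TPNQ : Type u := (TensorPN S N) ⧸ (stAnn (S := S) (TensorPN S N))

noncomputable instance tpnqLMod : LMod R (TPNQ S N) :=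
  quotLMod _ (fun r m hm => stAnn_stable S _ r hm)

theorem tpnq_smul_mk (r : R) (t : TensorPN S N) :
    (r • (QuotientAddGroup.mk t : TPNQ S N)) = QuotientAddGroup.mk (r • t) :=
  quotSMulMap_mk _ _ r t

/-- `μ⁰_n : P → (P⊗_S N)/st'`. -/
noncomputable def muQ (n : N) : LinMap R P (TPNQ S N) :=
  ⟨fun x => QuotientAddGroup.mk ((muT S N n).1 x),
   ⟨fun x y => by rw [(muT S N n).2.map_add]; rfl,
    fun r x => by rw [(muT S N n).2.map_smul, tpnq_smul_mk]⟩⟩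

theorem muQ_add (n n' : N) : muQ S N (n + n') = muQ S N n + muQ S N n' :=
  LinMap.ext (funext fun x => by
    show QuotientAddGroup.mk ((muT S N (n + n')).1 x) = _
    rw [muT_add]
    rfl)

theorem muQ_zero : muQ S N (0 : N) = 0 :=
  LinMap.ext (funext fun x => by
    show QuotientAddGroup.mk ((muT S N (0 : N)).1 x) = _
    rw [muT_zero]
    rfl)

theorem muQ_neg (n : N) : muQ S N (-n) = -(muQ S N n) := by
  have h2 := muQ_add S N n (-n)
  rw [add_neg_cancel, muQ_zero] at h2
  exact eq_neg_of_add_eq_zero_right h2.symm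

theorem muQ_sum {κ : Type*} (s : Finset κ) (f : κ → N) :
    muQ S N (∑ l ∈ s, f l) = ∑ l ∈ s, muQ S N (f l) := by
  classical
  induction s using Finset.induction with
  | empty => simpa using muQ_zero S N
  | @insert a t ha ih =>
      rw [Finset.sum_insert ha, Finset.sum_insert ha, muQ_add, ih]

theorem muQ_opsmul (s : ↥S) (n : N) :
    (s • muQ S N n : LinMap R P (TPNQ S N)) = muQ S N (s • n) :=
  LinMap.ext (funext fun x => by
    show QuotientAddGroup.mk ((muT S N n).1 (op s • x)) = QuotientAddGroup.mk ((muT S N (s • n)).1 x)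
    rw [← muT_opsmul]
    rfl)

theorem muQ_mem (hNu : IsUnitary (↥S) N) (n : N) :
    muQ S N n ∈ umax (↥S) (LinMap R P (TPNQ S N)) := by
  have hn := hNu n
  induction hn using AddSubgroup.closure_induction with
  | mem x hx =>
      obtain ⟨s, n', rfl⟩ := hx
      rw [← muQ_opsmul]
      exact smul_mem_umax s _
  | zero => rw [muQ_zero]; exact AddSubgroup.zero_mem _
  | add a b ha hb iha ihb => rw [muQ_add]; exact AddSubgroup.add_mem _ iha ihb
  | neg a ha iha => rw [muQ_neg]; exact AddSubgroup.neg_mem _ iha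

variable {S}

/-- The sum of the `τ`'s over a dual basis of `Pe` is `e`. -/
theorem tau_sum_eq
    (hSEnd : ((AddSubgroup.closure
        {h : LinMap R P P | ∃ s ∈ S, ∃ g : LinMap R P P, h = s * g} :
        AddSubgroup (LinMap R P P)) : Set (LinMap R P P)) = ↑S)
    (hact : ∀ (s : ↥S) (x : P), (MulOpposite.op s) • x = (s : LinMap R P P).1 x)
    (e : ↥S) (he : e * e = e) (k : ℕ) (γ : Fin k → LinMap R P R) (z : Fin k → P)
    (hdb : ∀ x : P, op e • x = x → x = ∑ l, (γ l).1 x • z l) :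
    ∑ l, tauS hSEnd e (γ l) (z l) = e := by
  apply Subtype.ext
  rw [AddSubmonoidClass.coe_finset_sum]
  apply LinMap.ext
  funext p
  rw [linMap_sum_apply]
  have hfix : op e • (op e • p) = op e • p := by
    rw [← LMod.mul_smul', ← op_mul, he]
  calc ∑ l, ((tauS hSEnd e (γ l) (z l) : LinMap R P P)).1 p
      = ∑ l, (γ l).1 (op e • p) • z l := by
        refine Finset.sum_congr rfl fun l _ => ?_
        show (sigmaE (γ l) (z l)).1 ((e : LinMap R P P).1 p) = _
        rw [← hact]
        rfl
    _ = op e • p := (hdb (op e • p) hfix).symm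
    _ = (e : LinMap R P P).1 p := hact e p

/-- Decomposition of elements of `N` through the contraction maps. -/
theorem n_decomp
    (hlp : IsLocallyProjective R P)
    (hact : ∀ (s : ↥S) (x : P), (MulOpposite.op s) • x = (s : LinMap R P P).1 x)
    (hSEnd : ((AddSubgroup.closure
        {h : LinMap R P P | ∃ s ∈ S, ∃ g : LinMap R P P, h = s * g} :
        AddSubgroup (LinMap R P P)) : Set (LinMap R P P)) = ↑S)
    (hfg : ∀ f : LinMap R P P, f ∈ S → f * f = f → IsFGSet R (Set.range f.1))
    (hNu : IsUnitary (↥S) N) (n : N) :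
    ∃ (e : ↥S) (k : ℕ) (γ : Fin k → LinMap R P R) (z : Fin k → P),
      n = ∑ l, xiQ N hSEnd hact e (γ l) ((muT S N n).1 (z l)) := by
  obtain ⟨e, he, hen⟩ := exists_idem_smul (C := ↥S) hNu n
  obtain ⟨k, γ, z, hz, hdb⟩ := exists_dual_basis_pe hlp hact hfg e he
  refine ⟨e, k, γ, z, ?_⟩
  conv_lhs => rw [← hen, ← tau_sum_eq hSEnd hact e he k γ z hdb]
  rw [LMod.sum_smul']
  refine Finset.sum_congr rfl fun l _ => ?_
  rw [show (muT S N n).1 (z l) = QuotientAddGroup.mk ((z l) ⊗ₜ[ℤ] n) from rfl,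
    xiQ_mk, xiT_tmul]

theorem muT_eq_zero
    (hlp : IsLocallyProjective R P)
    (hact : ∀ (s : ↥S) (x : P), (MulOpposite.op s) • x = (s : LinMap R P P).1 x)
    (hSEnd : ((AddSubgroup.closure
        {h : LinMap R P P | ∃ s ∈ S, ∃ g : LinMap R P P, h = s * g} :
        AddSubgroup (LinMap R P P)) : Set (LinMap R P P)) = ↑S)
    (hfg : ∀ f : LinMap R P P, f ∈ S → f * f = f → IsFGSet R (Set.range f.1))
    (hNu : IsUnitary (↥S) N) (n : N)
    (h0 : ∀ p : P, (muT S N n).1 p = 0) : n = 0 := by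
  obtain ⟨e, k, γ, z, hn⟩ := n_decomp N hlp hact hSEnd hfg hNu n
  rw [hn]
  refine Finset.sum_eq_zero fun l _ => ?_
  rw [h0, map_zero]

theorem xiQ_stAnn
    (hlp : IsLocallyProjective R P)
    (hact : ∀ (s : ↥S) (x : P), (MulOpposite.op s) • x = (s : LinMap R P P).1 x)
    (hSEnd : ((AddSubgroup.closure
        {h : LinMap R P P | ∃ s ∈ S, ∃ g : LinMap R P P, h = s * g} :
        AddSubgroup (LinMap R P P)) : Set (LinMap R P P)) = ↑S)
    (hfg : ∀ f : LinMap R P P, f ∈ S → f * f = f → IsFGSet R (Set.range f.1))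
    (hNu : IsUnitary (↥S) N) (s : ↥S) (γ : LinMap R P R)
    {w : TensorPN S N} (hw : w ∈ stAnn (S := S) (TensorPN S N)) :
    xiQ N hSEnd hact s γ w = 0 := by
  refine muT_eq_zero N hlp hact hSEnd hfg hNu _ fun p => ?_
  rw [show (muT S N (xiQ N hSEnd hact s γ w)).1 p =
    QuotientAddGroup.mk (p ⊗ₜ[ℤ] (xiQ N hSEnd hact s γ w)) from rfl,
    ← daggerT N hSEnd hact s γ w p]
  exact hw γ s p

theorem muT_stAnn_eq_zero
    (hlp : IsLocallyProjective R P)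
    (hact : ∀ (s : ↥S) (x : P), (MulOpposite.op s) • x = (s : LinMap R P P).1 x)
    (hSEnd : ((AddSubgroup.closure
        {h : LinMap R P P | ∃ s ∈ S, ∃ g : LinMap R P P, h = s * g} :
        AddSubgroup (LinMap R P P)) : Set (LinMap R P P)) = ↑S)
    (hfg : ∀ f : LinMap R P P, f ∈ S → f * f = f → IsFGSet R (Set.range f.1))
    (hNu : IsUnitary (↥S) N) (n : N)
    (h0 : ∀ p : P, (muT S N n).1 p ∈ stAnn (S := S) (TensorPN S N)) : n = 0 := by
  obtain ⟨e, k, γ, z, hn⟩ := n_decomp N hlp hact hSEnd hfg hNu n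
  rw [hn]
  refine Finset.sum_eq_zero fun l _ => ?_
  exact xiQ_stAnn N hlp hact hSEnd hfg hNu e (γ l) (h0 (z l))

/-- The contraction maps descend to `TPNQ`. -/
noncomputable def xiQQ
    (hlp : IsLocallyProjective R P)
    (hact : ∀ (s : ↥S) (x : P), (MulOpposite.op s) • x = (s : LinMap R P P).1 x)
    (hSEnd : ((AddSubgroup.closure
        {h : LinMap R P P | ∃ s ∈ S, ∃ g : LinMap R P P, h = s * g} :
        AddSubgroup (LinMap R P P)) : Set (LinMap R P P)) = ↑S)
    (hfg : ∀ f : LinMap R P P, f ∈ S → f * f = f → IsFGSet R (Set.range f.1))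
    (hNu : IsUnitary (↥S) N) (s : ↥S) (γ : LinMap R P R) : TPNQ S N →+ N :=
  QuotientAddGroup.lift _ (xiQ N hSEnd hact s γ)
    (fun w hw => xiQ_stAnn N hlp hact hSEnd hfg hNu s γ hw)

theorem daggerQ
    (hlp : IsLocallyProjective R P)
    (hact : ∀ (s : ↥S) (x : P), (MulOpposite.op s) • x = (s : LinMap R P P).1 x)
    (hSEnd : ((AddSubgroup.closure
        {h : LinMap R P P | ∃ s ∈ S, ∃ g : LinMap R P P, h = s * g} :
        AddSubgroup (LinMap R P P)) : Set (LinMap R P P)) = ↑S)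
    (hfg : ∀ f : LinMap R P P, f ∈ S → f * f = f → IsFGSet R (Set.range f.1))
    (hNu : IsUnitary (↥S) N) (s : ↥S) (γ : LinMap R P R) (m : TPNQ S N) (p : P) :
    γ.1 (op s • p) • m =
      (muQ S N (xiQQ N hlp hact hSEnd hfg hNu s γ m)).1 p := by
  refine QuotientAddGroup.induction_on m fun w => ?_
  rw [tpnq_smul_mk, daggerT N hSEnd hact s γ w p]
  rfl

theorem stPZero_tpnq
    (hlp : IsLocallyProjective R P)
    (hact : ∀ (s : ↥S) (x : P), (MulOpposite.op s) • x = (s : LinMap R P P).1 x)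
    (hSEnd : ((AddSubgroup.closure
        {h : LinMap R P P | ∃ s ∈ S, ∃ g : LinMap R P P, h = s * g} :
        AddSubgroup (LinMap R P P)) : Set (LinMap R P P)) = ↑S)
    (hfg : ∀ f : LinMap R P P, f ∈ S → f * f = f → IsFGSet R (Set.range f.1)) :
    stPZero R ↥S P (TPNQ S N) := by
  intro K hKstab hKprop m₀ hm₀
  have hcoord : ∀ (γ : LinMap R P R) (s : ↥S) (p : P), γ.1 (op s • p) • m₀ = 0 := by
    intro γ s p
    have h2 := hKprop s (gammaInner m₀ γ) (fun x => hKstab (γ.1 x) m₀ hm₀)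
    exact congrFun (congrArg Subtype.val h2) p
  obtain ⟨mb, rfl⟩ := QuotientAddGroup.mk_surjective m₀
  have hcoord' : ∀ (γ : LinMap R P R) (s : ↥S) (p : P),
      γ.1 (op s • p) • mb ∈ stAnn (S := S) (TensorPN S N) := by
    intro γ s p
    have h3 := hcoord γ s p
    rw [tpnq_smul_mk] at h3
    exact (QuotientAddGroup.eq_zero_iff _).mp h3
  have hmb : mb ∈ stAnn (S := S) (TensorPN S N) := by
    intro γ s p
    obtain ⟨e, he, hee⟩ := exists_idem_unit_list (C := ↥S) [s]
    have hse : s * e = s := (hee s (by simp)).2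
    obtain ⟨k, γ', z, hz, hdb⟩ := exists_dual_basis_pe hlp hact hfg e he
    have h1 : op s • p = ∑ l, (γ' l).1 (op s • p) • z l := hdb _ (op_smul_fix s e hse p)
    have h2 : γ.1 (op s • p) = ∑ l, (γ' l).1 (op s • p) * γ.1 (z l) := by
      conv_lhs => rw [h1]
      rw [γ.2.map_sum]
      exact Finset.sum_congr rfl fun l _ => by rw [γ.2.map_smul]; rfl
    rw [h2, LMod.sum_smul']
    refine Finset.sum_eq_zero fun l _ => ?_
    rw [LMod.mul_smul']
    have h3 : γ.1 (z l) • mb ∈ stAnn (S := S) (TensorPN S N) := by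
      have h4 := hcoord' γ e (z l)
      rw [hz l] at h4
      exact h4
    exact h3 (γ' l) s p
  exact (QuotientAddGroup.eq_zero_iff mb).mpr hmb

theorem sTr_tpnq (hNu : IsUnitary (↥S) N) :
    ∀ m : TPNQ S N, m ∈ sTrSub R ↥S P (TPNQ S N) := by
  intro m
  refine QuotientAddGroup.induction_on m fun w => ?_
  refine QuotientAddGroup.induction_on w fun t => ?_
  induction t using TensorProduct.induction_on with
  | zero => exact AddSubgroup.zero_mem _
  | tmul x n =>
      exact AddSubgroup.subset_closure ⟨muQ S N n, muQ_mem S N hNu n, x, rfl⟩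
  | add a b iha ihb =>
      have h1 : (QuotientAddGroup.mk (QuotientAddGroup.mk (a + b) : TensorPN S N) :
          TPNQ S N) = QuotientAddGroup.mk (QuotientAddGroup.mk a : TensorPN S N) +
          QuotientAddGroup.mk (QuotientAddGroup.mk b : TensorPN S N) := rfl
      rw [h1]
      exact AddSubgroup.add_mem _ iha ihb

theorem unitary_tpnq (hPu : IsUnitary R P) : IsUnitary R (TPNQ S N) := by
  have h1 : IsUnitary R (P ⊗[ℤ] N) := by
    intro t
    induction t using TensorProduct.induction_on with
    | zero => exact AddSubgroup.zero_mem _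
    | tmul x n =>
        have hx := hPu x
        induction hx using AddSubgroup.closure_induction with
        | mem y hy =>
            obtain ⟨r, y', rfl⟩ := hy
            exact AddSubgroup.subset_closure
              ⟨r, y' ⊗ₜ[ℤ] n, (tensorLMod_smul_tmul P N r y' n).symm⟩
        | zero =>
            rw [TensorProduct.zero_tmul]
            exact AddSubgroup.zero_mem _
        | add a b ha hb iha ihb =>
            rw [TensorProduct.add_tmul]
            exact AddSubgroup.add_mem _ iha ihb
        | neg a ha iha =>
            rw [TensorProduct.neg_tmul]
            exact AddSubgroup.neg_mem _ iha
    | add a b iha ihb => exact AddSubgroup.add_mem _ iha ihb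
  have h2 : IsUnitary R (TensorPN S N) :=
    isUnitary_quot _ (fun r t => tensorPN_smul_mk S N r t) h1
  exact isUnitary_quot _ (fun r t => tpnq_smul_mk S N r t) h2

end mainess


section mainfinal

open MulOpposite CategoryTheory

variable {R : Type u} [NonUnitalRing R] [HasLocalUnits R]
variable {P : Type u} [AddCommGroup P] [LMod R P]
variable {S : NonUnitalSubring (LinMap R P P)} [HasLocalUnits ↥S]
variable [LMod (↥S)ᵐᵒᵖ P] [SMulCommClass R (↥S)ᵐᵒᵖ P]

theorem main_esssurj
    (hPu : IsUnitary R P)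
    (hlp : IsLocallyProjective R P)
    (hact : ∀ (s : ↥S) (x : P), (MulOpposite.op s) • x = (s : LinMap R P P).1 x)
    (hSEnd : ((AddSubgroup.closure
        {h : LinMap R P P | ∃ s ∈ S, ∃ g : LinMap R P P, h = s * g} :
        AddSubgroup (LinMap R P P)) : Set (LinMap R P P)) = ↑S)
    (hfg : ∀ f : LinMap R P P, f ∈ S → f * f = f → IsFGSet R (Set.range f.1)) :
    (CategoryTheory.ObjectProperty.ι
        (fun M : UMod.{u, u} R => stPZero R ↥S P M.carrier ∧
          ∀ m : M.carrier, m ∈ sTrSub R ↥S P M.carrier) ⋙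
      sHomF R ↥S P).EssSurj := by
  constructor
  intro Nobj
  have hNu : IsUnitary (↥S) Nobj.carrier := Nobj.unitary
  let Mobj : CategoryTheory.ObjectProperty.FullSubcategory
      (fun M : UMod.{u, u} R => stPZero R ↥S P M.carrier ∧
        ∀ m : M.carrier, m ∈ sTrSub R ↥S P M.carrier) :=
    ⟨⟨TPNQ S Nobj.carrier, unitary_tpnq Nobj.carrier hPu⟩,
      stPZero_tpnq Nobj.carrier hlp hact hSEnd hfg, sTr_tpnq Nobj.carrier hNu⟩
  let ηf : Nobj.carrier → SHom R ↥S P (TPNQ S Nobj.carrier) :=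
    fun n => ⟨muQ S Nobj.carrier n, muQ_mem S Nobj.carrier hNu n⟩
  have ηadd : ∀ n n', ηf (n + n') = ηf n + ηf n' :=
    fun n n' => Subtype.ext (muQ_add S Nobj.carrier n n')
  have ηsmul : ∀ (s : ↥S) (n : Nobj.carrier), ηf (s • n) = s • ηf n :=
    fun s n => Subtype.ext (muQ_opsmul S Nobj.carrier s n).symm
  have ηinj : ∀ n, ηf n = 0 → n = 0 := by
    intro n hn
    have h1 : muQ S Nobj.carrier n = 0 := congrArg Subtype.val hn
    refine muT_stAnn_eq_zero Nobj.carrier hlp hact hSEnd hfg hNu n fun p => ?_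
    have h2 : (muQ S Nobj.carrier n).1 p = 0 := congrFun (congrArg Subtype.val h1) p
    exact (QuotientAddGroup.eq_zero_iff _).mp h2
  have ηinj2 : ∀ n n', ηf n = ηf n' → n = n' := by
    intro n n' h
    have h4 : ηf (-n') = -(ηf n') := Subtype.ext (muQ_neg S Nobj.carrier n')
    have h3 : ηf (n - n') = 0 := by
      rw [sub_eq_add_neg, ηadd, h4, h, add_neg_cancel]
    exact sub_eq_zero.mp (ηinj _ h3)
  have ηsur : ∀ α : SHom R ↥S P (TPNQ S Nobj.carrier), ∃ n, ηf n = α := by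
    intro α
    have key : ∀ g ∈ umax (↥S) (LinMap R P (TPNQ S Nobj.carrier)),
        ∃ n, muQ S Nobj.carrier n = g := by
      intro g hg
      induction hg using AddSubgroup.closure_induction with
      | mem g hg =>
          obtain ⟨s, g', rfl⟩ := hg
          obtain ⟨e, he, hee⟩ := exists_idem_unit_list (C := ↥S) [s]
          have hse : s * e = s := (hee s (by simp)).2
          obtain ⟨k, γ, z, hz, hdb⟩ := exists_dual_basis_pe hlp hact hfg e he
          refine ⟨∑ l, xiQQ Nobj.carrier hlp hact hSEnd hfg hNu s (γ l) (g'.1 (z l)), ?_⟩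
          apply LinMap.ext
          funext x
          rw [muQ_sum, linMap_sum_apply]
          have h5 : ∀ l : Fin k,
              (muQ S Nobj.carrier
                (xiQQ Nobj.carrier hlp hact hSEnd hfg hNu s (γ l) (g'.1 (z l)))).1 x
              = (γ l).1 (op s • x) • g'.1 (z l) :=
            fun l => (daggerQ Nobj.carrier hlp hact hSEnd hfg hNu s (γ l) (g'.1 (z l)) x).symm
          rw [Finset.sum_congr rfl fun l _ => h5 l]
          show ∑ l, (γ l).1 (op s • x) • g'.1 (z l) = g'.1 (op s • x)
          conv_rhs => rw [hdb (op s • x) (op_smul_fix s e hse x)]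
          rw [g'.2.map_sum]
          exact Finset.sum_congr rfl fun l _ => (g'.2.map_smul _ _).symm
      | zero => exact ⟨0, muQ_zero S Nobj.carrier⟩
      | add a b ha hb iha ihb =>
          obtain ⟨na, hna⟩ := iha
          obtain ⟨nb, hnb⟩ := ihb
          exact ⟨na + nb, by rw [muQ_add, hna, hnb]⟩
      | neg a ha iha =>
          obtain ⟨na, hna⟩ := iha
          exact ⟨-na, by rw [muQ_neg, hna]⟩
    obtain ⟨n, hn⟩ := key α.1 α.2
    exact ⟨n, Subtype.ext hn⟩
  choose ginv hginv using ηsur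
  have gadd : ∀ α β, ginv (α + β) = ginv α + ginv β := by
    intro α β
    apply ηinj2
    rw [hginv, ηadd, hginv, hginv]
  have gsmul : ∀ (s : ↥S) α, ginv (s • α) = s • ginv α := by
    intro s α
    apply ηinj2
    rw [hginv, ηsmul, hginv]
  refine ⟨Mobj, ⟨⟨⟨ginv, gadd, gsmul⟩, ⟨ηf, ηadd, ηsmul⟩, ?_, ?_⟩⟩⟩
  · apply LinMap.ext
    funext α
    exact hginv α
  · apply LinMap.ext
    funext n
    exact ηinj2 _ _ (hginv (ηf n))

end mainfinal

/-! ## STATEMENT 0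
Let `R` be a ring with local units and `P` a locally projective unitary left
`R`-module. Let `S` be a subring of `End_R(P)` such that `P` is a unitary
right `S`-module (acting by evaluation), `S·End_R(P) = S`, and `Pf` is a
finitely generated left `R`-module for every idempotent `f ∈ S`. Then the
functor `SHom_R(P,−) : 𝒞_P → SMod` is an equivalence of categories. -/
theorem shom_equivalence_of_locally_projective
    (R : Type u) [NonUnitalRing R] [HasLocalUnits R]
    (P : Type u) [AddCommGroup P] [LMod R P]
    (hPu : IsUnitary R P)
    (hlp : IsLocallyProjective R P)
    (S : NonUnitalSubring (LinMap R P P)) [HasLocalUnits ↥S]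
    [LMod (↥S)ᵐᵒᵖ P] [SMulCommClass R (↥S)ᵐᵒᵖ P]
    (hact : ∀ (s : ↥S) (x : P), (MulOpposite.op s) • x = (s : LinMap R P P).1 x)
    (hPS : IsUnitary (↥S)ᵐᵒᵖ P)
    (hSEnd : ((AddSubgroup.closure
        {h : LinMap R P P | ∃ s ∈ S, ∃ g : LinMap R P P, h = s * g} :
        AddSubgroup (LinMap R P P)) : Set (LinMap R P P)) = ↑S)
    (hfg : ∀ f : LinMap R P P, f ∈ S → f * f = f → IsFGSet R (Set.range f.1)) :
    (CategoryTheory.ObjectProperty.ι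
        (fun M : UMod.{u, u} R => stPZero R ↥S P M.carrier ∧
          ∀ m : M.carrier, m ∈ sTrSub R ↥S P M.carrier) ⋙
      sHomF R ↥S P).IsEquivalence :=
  ⟨main_faithful _ (fun M hM => hM.2), main_full hlp hact hSEnd hfg,
    main_esssurj hPu hlp hact hSEnd hfg⟩
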